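/- arXiv:0808.1217 — 4 statements merged into one kernel-verified Lean document; each statement's English description precedes it below -/
import Mathlib

section
/- Let T = A₁A₂A₃ be an empty lattice triangle and O a lattice point. Then the triangle with vertices A₁₂ = O + →A₁A₂, A₁₃ = O + →A₁A₃, A₂₃ = O + →A₂A₃ is also an empty lattice triangle. -/
open Set MeasureTheory

/-- Embed an integer lattice point into the real plane. -/
def toR (p : ℤ × ℤ) : ℝ × ℝ := ((p.1 : ℝ), (p.2 : ℝ))

/-- Cross product (determinant) of two integer vectors. -/
def cross (u v : ℤ × ℤ) : ℤ := u.1 * v.2 - u.2 * v.1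

/-- The primitive vector in the direction of `v`. -/
def primitive (v : ℤ × ℤ) : ℤ × ℤ :=
  (v.1 / Int.gcd v.1 v.2, v.2 / Int.gcd v.1 v.2)

/-- The (closed) polygon determined by a cyclic list of lattice vertices. -/
def latticeHull {n : ℕ} (A : Fin n → ℤ × ℤ) : Set (ℝ × ℝ) :=
  convexHull ℝ (Set.range (toR ∘ A))

/-- Lattice points on the boundary of a plane set. -/
def bdryPts (S : Set (ℝ × ℝ)) : Set (ℤ × ℤ) := {p | toR p ∈ frontier S}

/-- Lattice points in the interior of a plane set. -/
def intPts (S : Set (ℝ × ℝ)) : Set (ℤ × ℤ) := {p | toR p ∈ interior S}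

/-- The closed triangle spanned by three lattice points. -/
def tri (a b c : ℤ × ℤ) : Set (ℝ × ℝ) := convexHull ℝ {toR a, toR b, toR c}

/-- An empty (primitive) lattice triangle: nondegenerate and containing no
lattice points other than its vertices. -/
def EmptyTri (a b c : ℤ × ℤ) : Prop :=
  cross (b - a) (c - a) ≠ 0 ∧
  ∀ p : ℤ × ℤ, toR p ∈ tri a b c → p = a ∨ p = b ∨ p = c

/-- The dual polygon: convex hull of `O + primitive(edge vector)`. -/
def dualHull {n : ℕ} [NeZero n] (A : Fin n → ℤ × ℤ) (O : ℤ × ℤ) : Set (ℝ × ℝ) :=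
  convexHull ℝ (Set.range fun i => toR (O + primitive (A (i + 1) - A i)))

/-- `A` lists in counterclockwise cyclic order the vertices of a (strictly) convex
lattice polygon. -/
def IsConvexPoly {n : ℕ} [NeZero n] (A : Fin n → ℤ × ℤ) : Prop :=
  Function.Injective A ∧
  (∀ i, 0 < cross (A (i + 1) - A i) (A (i + 2) - A (i + 1))) ∧
  (∀ i, segment ℝ (toR (A i)) (toR (A (i + 1))) ⊆ frontier (latticeHull A))

/-- `A` lists in counterclockwise cyclic order **all** boundary lattice points of a
convex lattice polygon (straight angles allowed). -/
def IsWeakConvexPoly {n : ℕ} [NeZero n] (A : Fin n → ℤ × ℤ) : Prop :=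
  Function.Injective A ∧
  (∀ i, 0 ≤ cross (A (i + 1) - A i) (A (i + 2) - A (i + 1))) ∧
  (∀ i, segment ℝ (toR (A i)) (toR (A (i + 1))) ⊆ frontier (latticeHull A)) ∧
  bdryPts (latticeHull A) = Set.range A

lemma mem_triple_hull {a b c x : ℝ × ℝ} :
    x ∈ convexHull ℝ ({a, b, c} : Set (ℝ × ℝ)) ↔
      ∃ α β γ : ℝ, 0 ≤ α ∧ 0 ≤ β ∧ 0 ≤ γ ∧ α + β + γ = 1 ∧ α • a + β • b + γ • c = x := by
  constructor
  · intro hx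
    rw [show ({a, b, c} : Set (ℝ × ℝ)) = insert a {b, c} from rfl,
      convexHull_insert ⟨b, by simp⟩, mem_convexJoin] at hx
    obtain ⟨a', ha', z, hz, hxz⟩ := hx
    rw [Set.mem_singleton_iff] at ha'
    subst ha'
    rw [convexHull_pair] at hz
    obtain ⟨u, v, hu, hv, huv, rfl⟩ := hz
    obtain ⟨s, t, hs, ht, hst, rfl⟩ := hxz
    refine ⟨s, t * u, t * v, hs, by positivity, by positivity, by nlinarith, ?_⟩
    module
  · rintro ⟨α, β, γ, hα, hβ, hγ, hsum, rfl⟩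
    have ha : a ∈ convexHull ℝ ({a, b, c} : Set (ℝ × ℝ)) := subset_convexHull _ _ (by simp)
    have hb : b ∈ convexHull ℝ ({a, b, c} : Set (ℝ × ℝ)) := subset_convexHull _ _ (by simp)
    have hc : c ∈ convexHull ℝ ({a, b, c} : Set (ℝ × ℝ)) := subset_convexHull _ _ (by simp)
    by_cases h0 : β + γ = 0
    · have hβ0 : β = 0 := by linarith
      have hγ0 : γ = 0 := by linarith
      have hα1 : α = 1 := by linarith
      simpa [hβ0, hγ0, hα1] using ha
    · have h0' : 0 < β + γ := lt_of_le_of_ne (by linarith) (Ne.symm h0)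
      have hz : (β / (β + γ)) • b + (γ / (β + γ)) • c ∈ convexHull ℝ ({a, b, c} : Set (ℝ × ℝ)) :=
        (convex_convexHull ℝ _) hb hc (by positivity) (by positivity) (by field_simp)
      have := (convex_convexHull ℝ ({a, b, c} : Set (ℝ × ℝ))) ha hz hα (by linarith)
        (by linarith : α + (β + γ) = 1)
      have heq : α • a + (β + γ) • ((β / (β + γ)) • b + (γ / (β + γ)) • c)
          = α • a + β • b + γ • c := by
        match_scalars <;> field_simp
      rwa [heq] at this

/-- If `A₁A₂A₃` is an empty lattice triangle and `O` any lattice point, then the triangle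
with vertices `A₁₂ = O + (A₂-A₁)`, `A₁₃ = O + (A₃-A₁)`, `A₂₃ = O + (A₃-A₂)` is also an
empty lattice triangle. -/
theorem stmt_5 (A₁ A₂ A₃ O : ℤ × ℤ) (h : EmptyTri A₁ A₂ A₃) :
    EmptyTri (O + (A₂ - A₁)) (O + (A₃ - A₁)) (O + (A₃ - A₂)) := by
  obtain ⟨hnd, hpts⟩ := h
  constructor
  · intro h0
    apply hnd
    simp only [cross, Prod.fst_add, Prod.fst_sub, Prod.snd_add, Prod.snd_sub] at h0 ⊢
    linear_combination h0
  · intro p hp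
    rw [tri, mem_triple_hull] at hp
    obtain ⟨α, β, γ, hα, hβ, hγ, hsum, hcomb⟩ := hp
    simp only [toR, Prod.smul_mk, smul_eq_mul, Prod.mk_add_mk, Prod.mk.injEq,
      Prod.fst_add, Prod.fst_sub, Prod.snd_add, Prod.snd_sub] at hcomb
    obtain ⟨h1, h2⟩ := hcomb
    push_cast at h1 h2
    -- p ≠ O
    have hdet : ((A₂.1 - A₁.1 : ℤ) : ℝ) * ((A₃.2 - A₁.2 : ℤ) : ℝ)
        - ((A₂.2 - A₁.2 : ℤ) : ℝ) * ((A₃.1 - A₁.1 : ℤ) : ℝ) ≠ 0 := by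
      intro hc
      apply hnd
      have : ((cross (A₂ - A₁) (A₃ - A₁) : ℤ) : ℝ) = 0 := by
        simp only [cross, Prod.fst_sub, Prod.snd_sub]
        push_cast at hc ⊢
        linear_combination hc
      exact_mod_cast this
    have hpO : p ≠ O := by
      rintro rfl
      have e1 : (α - γ) * ((A₂.1 : ℝ) - A₁.1) + (β + γ) * ((A₃.1 : ℝ) - A₁.1) = 0 := by
        linear_combination h1 - (p.1 : ℝ) * hsum
      have e2 : (α - γ) * ((A₂.2 : ℝ) - A₁.2) + (β + γ) * ((A₃.2 : ℝ) - A₁.2) = 0 := by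
        linear_combination h2 - (p.2 : ℝ) * hsum
      have hs : (α - γ) * (((A₂.1 - A₁.1 : ℤ) : ℝ) * ((A₃.2 - A₁.2 : ℤ) : ℝ)
          - ((A₂.2 - A₁.2 : ℤ) : ℝ) * ((A₃.1 - A₁.1 : ℤ) : ℝ)) = 0 := by
        push_cast
        linear_combination ((A₃.2 : ℝ) - A₁.2) * e1 - ((A₃.1 : ℝ) - A₁.1) * e2
      have ht : (β + γ) * (((A₂.1 - A₁.1 : ℤ) : ℝ) * ((A₃.2 - A₁.2 : ℤ) : ℝ)
          - ((A₂.2 - A₁.2 : ℤ) : ℝ) * ((A₃.1 - A₁.1 : ℤ) : ℝ)) = 0 := by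
        push_cast
        linear_combination ((A₂.1 : ℝ) - A₁.1) * e2 - ((A₂.2 : ℝ) - A₁.2) * e1
      have hs0 : α - γ = 0 := by
        rcases mul_eq_zero.mp hs with h' | h' 
        · exact h'
        · exact absurd h' hdet
      have ht0 : β + γ = 0 := by
        rcases mul_eq_zero.mp ht with h' | h'
        · exact h'
        · exact absurd h' hdet
      have : β = 0 := by linarith
      have : γ = 0 := by linarith
      linarith
    rcases le_total γ α with hle | hle
    · -- p ∈ tri O A₁₂ A₁₃, use q = p - O + A₁
      set q : ℤ × ℤ := p - O + A₁ with hq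
      have hmem : toR q ∈ tri A₁ A₂ A₃ := by
        rw [tri, mem_triple_hull]
        refine ⟨γ, α - γ, β + γ, hγ, by linarith, by linarith, by ring_nf; linarith, ?_⟩
        simp only [toR, Prod.smul_mk, smul_eq_mul, Prod.mk_add_mk, Prod.mk.injEq, hq,
          Prod.fst_add, Prod.fst_sub, Prod.snd_add, Prod.snd_sub]
        constructor <;> push_cast
        · linear_combination h1 + ((A₁.1 : ℝ) - (O.1 : ℝ)) * hsum
        · linear_combination h2 + ((A₁.2 : ℝ) - (O.2 : ℝ)) * hsum
      rcases hpts q hmem with hA | hA | hA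
      · exfalso
        apply hpO
        rw [hq, Prod.ext_iff] at hA
        rw [Prod.ext_iff]
        simp only [Prod.fst_add, Prod.fst_sub, Prod.snd_add, Prod.snd_sub] at hA ⊢
        omega
      · left
        rw [hq, Prod.ext_iff] at hA
        rw [Prod.ext_iff]
        simp only [Prod.fst_add, Prod.fst_sub, Prod.snd_add, Prod.snd_sub] at hA ⊢
        omega
      · right; left
        rw [hq, Prod.ext_iff] at hA
        rw [Prod.ext_iff]
        simp only [Prod.fst_add, Prod.fst_sub, Prod.snd_add, Prod.snd_sub] at hA ⊢
        omega
    · -- p ∈ tri O A₁₃ A₂₃, use q = O + A₃ - p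
      set q : ℤ × ℤ := O + A₃ - p with hq
      have hmem : toR q ∈ tri A₁ A₂ A₃ := by
        rw [tri, mem_triple_hull]
        refine ⟨α + β, γ - α, α, by linarith, by linarith, hα, by ring_nf; linarith, ?_⟩
        simp only [toR, Prod.smul_mk, smul_eq_mul, Prod.mk_add_mk, Prod.mk.injEq, hq,
          Prod.fst_add, Prod.fst_sub, Prod.snd_add, Prod.snd_sub]
        constructor <;> push_cast
        · linear_combination -h1 + ((O.1 : ℝ) + (A₃.1 : ℝ)) * hsum
        · linear_combination -h2 + ((O.2 : ℝ) + (A₃.2 : ℝ)) * hsum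
      rcases hpts q hmem with hA | hA | hA
      · right; left
        rw [hq, Prod.ext_iff] at hA
        rw [Prod.ext_iff]
        simp only [Prod.fst_add, Prod.fst_sub, Prod.snd_add, Prod.snd_sub] at hA ⊢
        omega
      · right; right
        rw [hq, Prod.ext_iff] at hA
        rw [Prod.ext_iff]
        simp only [Prod.fst_add, Prod.fst_sub, Prod.snd_add, Prod.snd_sub] at hA ⊢
        omega
      · exfalso
        apply hpO
        rw [hq, Prod.ext_iff] at hA
        rw [Prod.ext_iff]
        simp only [Prod.fst_add, Prod.fst_sub, Prod.snd_add, Prod.snd_sub] at hA ⊢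
        omega
end

section
/- Let M = ABCD be a convex lattice quadrilateral with exactly 4 lattice points on its boundary (its vertices), exactly one interior lattice point O, and with O lying on both diagonals (O = AC ∩ BD). Then OA = OC and OB = OD as vectors, i.e., M is a parallelogram with center O. -/
open Set MeasureTheory

private lemma toR_inj : Function.Injective toR := by
  intro p q h
  have h1 : (p.1 : ℝ) = q.1 := congrArg Prod.fst h
  have h2 : (p.2 : ℝ) = q.2 := congrArg Prod.snd h
  exact Prod.ext (by exact_mod_cast h1) (by exact_mod_cast h2)

private lemma seg_split {E : Type*} [AddCommGroup E] [Module ℝ E] {x y z p : E}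
    (hy : y ∈ openSegment ℝ x z) (hp : p ∈ openSegment ℝ x z) :
    p = y ∨ p ∈ openSegment ℝ x y ∨ p ∈ openSegment ℝ y z := by
  obtain ⟨a, b, ha, hb, hab, hy⟩ := hy
  obtain ⟨c, d, hc, hd, hcd, hp⟩ := hp
  rcases lt_trichotomy d b with h | h | h
  · right; left
    refine ⟨1 - d / b, d / b, by rw [sub_pos]; exact (div_lt_one hb).2 h,
      by positivity, by ring, ?_⟩
    rw [← hy, ← hp]
    match_scalars
    · field_simp
      linear_combination d * hab - b * hcd
    · field_simp
  · left
    have hac : c = a := by linarith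
    rw [← hy, ← hp, h, hac]
  · right; right
    refine ⟨c / a, 1 - c / a, by positivity,
      by rw [sub_pos]; exact (div_lt_one ha).2 (by linarith), by ring, ?_⟩
    rw [← hy, ← hp]
    match_scalars
    · field_simp
    · field_simp
      linear_combination c * hab - a * hcd

private lemma key (S : Set (ℝ × ℝ)) (hS : Convex ℝ S)
    (X Y O : ℤ × ℤ) (hX : toR X ∈ S) (hY : toR Y ∈ S)
    (hOi : toR O ∈ interior S)
    (hseg : toR O ∈ openSegment ℝ (toR X) (toR Y))
    (honly : ∀ p : ℤ × ℤ, toR p ∈ interior S → p = O) :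
    X + Y = (2 : ℤ) • O := by
  obtain ⟨a, b, ha, hb, hab, hO⟩ := hseg
  have hM : toR (X + Y - O) ∈ openSegment ℝ (toR X) (toR Y) := by
    refine ⟨b, a, hb, ha, by linarith, ?_⟩
    have : toR (X + Y - O) = toR X + toR Y - toR O := by
      simp only [toR, Prod.ext_iff, Prod.fst_add, Prod.snd_add, Prod.fst_sub,
        Prod.snd_sub]
      constructor <;> (push_cast; ring)
    rw [this, ← hO]
    have h1 : (b • toR X + a • toR Y) + (a • toR X + b • toR Y)
        = toR X + toR Y := by
      rw [add_add_add_comm, ← add_smul, ← add_smul, hab, add_comm b a, hab,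
        one_smul, one_smul]
    linear_combination (norm := abel) h1
  have hMi : toR (X + Y - O) ∈ interior S := by
    rcases seg_split ⟨a, b, ha, hb, hab, hO⟩ hM with h | h | h
    · rw [h]; exact hOi
    · exact hS.openSegment_self_interior_subset_interior hX hOi h
    · exact hS.openSegment_interior_self_subset_interior hOi hY h
  have := honly _ hMi
  have : X + Y - O = O := this
  rw [two_zsmul]
  exact sub_eq_iff_eq_add.mp this

/-- If a convex lattice quadrilateral has exactly `4` boundary lattice points, exactly one
interior lattice point `O`, and `O` lies on both diagonals, then it is a parallelogram
with center `O`. -/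
theorem stmt_8 (A B C D O : ℤ × ℤ)
    (hconv : IsConvexPoly ![A, B, C, D])
    (hbd : bdryPts (latticeHull ![A, B, C, D]) = {A, B, C, D})
    (hint : intPts (latticeHull ![A, B, C, D]) = {O})
    (hAC : toR O ∈ openSegment ℝ (toR A) (toR C))
    (hBD : toR O ∈ openSegment ℝ (toR B) (toR D)) :
    A + C = (2 : ℤ) • O ∧ B + D = (2 : ℤ) • O := by
  have hconvx : Convex ℝ (latticeHull ![A, B, C, D]) := convex_convexHull ℝ _
  have hmem : ∀ i : Fin 4, toR (![A, B, C, D] i) ∈ latticeHull ![A, B, C, D] := by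
    intro i
    exact subset_convexHull ℝ _ ⟨i, rfl⟩
  have hOi : toR O ∈ interior (latticeHull ![A, B, C, D]) := by
    have : O ∈ intPts (latticeHull ![A, B, C, D]) := by rw [hint]; rfl
    exact this
  have honly : ∀ p : ℤ × ℤ, toR p ∈ interior (latticeHull ![A, B, C, D]) → p = O := by
    intro p hp
    have : p ∈ intPts (latticeHull ![A, B, C, D]) := hp
    rwa [hint] at this
  exact ⟨key _ hconvx A C O (hmem 0) (hmem 2) hOi hAC honly,
    key _ hconvx B D O (hmem 1) (hmem 3) hOi hBD honly⟩
end

section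
/- Let M be a lattice triangle ABC with exactly one interior lattice point O and no boundary lattice points other than A, B, C. Let A' = 2O − A and C' = 2O − C. Then A', C' are lattice points, and AC'A'C is a parallelogram with center O containing exactly one interior lattice point O and no boundary lattice points other than its vertices; moreover each of the triangles AC'B, C'BA' is empty, so ABC can be transformed into the parallelogram AC'A'C by the sequence of elementary operations ABC → AC'BC → AC'BA'C → AC'A'C. -/
open Set MeasureTheory

lemma toR_add (p q : ℤ × ℤ) : toR (p + q) = toR p + toR q := by
  simp [toR, Prod.ext_iff]
lemma toR_sub (p q : ℤ × ℤ) : toR (p - q) = toR p - toR q := by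
  simp [toR, Prod.ext_iff]
lemma toR_smul (m : ℤ) (p : ℤ × ℤ) : toR (m • p) = (m : ℝ) • toR p := by
  simp [toR, Prod.ext_iff]
lemma toR_inj_s10 {p q : ℤ × ℤ} (h : toR p = toR q) : p = q := by
  simp [toR, Prod.ext_iff] at h ⊢; exact_mod_cast h

lemma cross_basis (u v p : ℤ × ℤ) : cross u v • p = cross p v • u + cross u p • v := by
  apply Prod.ext <;>
    simp only [cross, Prod.smul_fst, Prod.smul_snd, Prod.fst_add, Prod.snd_add, smul_eq_mul] <;>
    ring

lemma coords_unique {U V : ℝ × ℝ} {g : ℝ} (hg : U.1*V.2 - U.2*V.1 = g) (h0 : g ≠ 0)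
    {s t : ℝ} (h : s • U + t • V = 0) : s = 0 ∧ t = 0 := by
  have h1 : s*U.1 + t*V.1 = 0 := by
    have := congrArg Prod.fst h; simpa using this
  have h2 : s*U.2 + t*V.2 = 0 := by
    have := congrArg Prod.snd h; simpa using this
  constructor
  · have : s * g = 0 := by linear_combination (-s)*hg + V.2*h1 - V.1*h2
    rcases mul_eq_zero.1 this with h|h; exacts [h, absurd h h0]
  · have : t * g = 0 := by linear_combination (-t)*hg - U.2*h1 + U.1*h2
    rcases mul_eq_zero.1 this with h|h; exacts [h, absurd h h0]
lemma mem_hull3_iff {p1 p2 p3 x : ℝ × ℝ} :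
    x ∈ convexHull ℝ ({p1, p2, p3} : Set (ℝ × ℝ)) ↔
    ∃ α β γ : ℝ, 0 ≤ α ∧ 0 ≤ β ∧ 0 ≤ γ ∧ α + β + γ = 1 ∧ α • p1 + β • p2 + γ • p3 = x := by
  rw [convexHull_insert (insert_nonempty _ _), convexHull_pair, mem_convexJoin]
  constructor
  · rintro ⟨a, rfl, z, ⟨r, s, hr, hs, hrs, rfl⟩, ⟨p, q, hp, hq, hpq, rfl⟩⟩
    refine ⟨p, q*r, q*s, hp, by positivity, by positivity, by nlinarith, ?_⟩
    rw [smul_add, smul_smul, smul_smul, add_assoc]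
  · rintro ⟨α, β, γ, hα, hβ, hγ, hsum, rfl⟩
    rcases eq_or_lt_of_le (add_nonneg hβ hγ) with h0 | hpos
    · have hb : β = 0 := by linarith
      have hc : γ = 0 := by linarith
      have ha : α = 1 := by linarith
      refine ⟨p1, rfl, p2, left_mem_segment ℝ p2 p3, 1, 0, by norm_num, le_refl _, by norm_num, ?_⟩
      rw [ha, hb, hc]; simp
    · refine ⟨p1, rfl, (β/(β+γ)) • p2 + (γ/(β+γ)) • p3,
        ⟨β/(β+γ), γ/(β+γ), by positivity, by positivity, by field_simp, rfl⟩,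
        α, β + γ, hα, hpos.le, by linarith, ?_⟩
      rw [smul_add, smul_smul, smul_smul, mul_div_cancel₀ _ hpos.ne',
        mul_div_cancel₀ _ hpos.ne', ← add_assoc]

lemma unimod (q u v : ℤ × ℤ) (h0 : cross u v ≠ 0)
    (hemp : ∀ p : ℤ × ℤ, toR p ∈ convexHull ℝ ({toR q, toR (q+u), toR (q+v)} : Set (ℝ × ℝ)) →
      p = q ∨ p = q + u ∨ p = q + v) :
    cross u v = 1 ∨ cross u v = -1 := by
  set g : ℤ := cross u v with hgdef
  by_cases hrep : ∀ p : ℤ × ℤ, ∃ m n : ℤ, p = m • u + n • v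
  · obtain ⟨m1, n1, h1⟩ := hrep (1, 0)
    obtain ⟨m2, n2, h2⟩ := hrep (0, 1)
    rw [Prod.ext_iff] at h1 h2
    simp only [Prod.fst_add, Prod.snd_add, Prod.smul_fst, Prod.smul_snd, smul_eq_mul] at h1 h2
    have key : (m1*n2 - n1*m2) * g = 1 := by
      rw [hgdef]
      simp only [cross]
      nlinarith [h1.1, h1.2, h2.1, h2.2]
    have hdvd : g ∣ 1 := ⟨m1*n2 - n1*m2, by linarith [key]⟩
    exact Int.isUnit_iff.1 (isUnit_of_dvd_one hdvd)
  · push_neg at hrep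
    obtain ⟨q0, hq0⟩ := hrep
    set a : ℤ := cross q0 v with hadef
    set b : ℤ := cross u q0 with hbdef
    have hbase : g • q0 = a • u + b • v := cross_basis u v q0
    have hgne : (g : ℝ) ≠ 0 := Int.cast_ne_zero.2 h0
    have hUV : (toR u).1*(toR v).2 - (toR u).2*(toR v).1 = (g:ℝ) := by
      rw [hgdef]; simp only [cross, toR]; push_cast; ring
    set α : ℝ := (a:ℝ)/g with hα
    set β : ℝ := (b:ℝ)/g with hβ
    have hq0R : toR q0 = α • toR u + β • toR v := by
      have hcb := congrArg toR hbase
      rw [toR_add, toR_smul, toR_smul, toR_smul] at hcb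
      have h' : (g:ℝ)⁻¹ • ((g:ℝ) • toR q0)
          = (g:ℝ)⁻¹ • ((a:ℝ) • toR u + (b:ℝ) • toR v) := by rw [hcb]
      rw [inv_smul_smul₀ hgne] at h'
      rw [h', smul_add, smul_smul, smul_smul, hα, hβ]
      congr 1 <;> rw [div_eq_inv_mul]
    set m0 : ℤ := ⌊α⌋
    set n0 : ℤ := ⌊β⌋
    set fα : ℝ := α - m0 with hfα
    set fβ : ℝ := β - n0 with hfβ
    have hfα0 : 0 ≤ fα := by have := Int.floor_le α; rw [hfα]; linarith
    have hfα1 : fα < 1 := by have := Int.lt_floor_add_one α; rw [hfα]; linarith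
    have hfβ0 : 0 ≤ fβ := by have := Int.floor_le β; rw [hfβ]; linarith
    have hfβ1 : fβ < 1 := by have := Int.lt_floor_add_one β; rw [hfβ]; linarith
    have hnotboth : ¬ (fα = 0 ∧ fβ = 0) := by
      rintro ⟨hz1, hz2⟩
      apply hq0 m0 n0
      have ha' : a = m0 * g := by
        have h' : α = (m0:ℝ) := by rw [hfα] at hz1; linarith
        rw [hα] at h'
        field_simp at h'
        rw [mul_comm]; exact_mod_cast h'
      have hb' : b = n0 * g := by
        have h' : β = (n0:ℝ) := by rw [hfβ] at hz2; linarith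
        rw [hβ] at h'
        field_simp at h'
        rw [mul_comm]; exact_mod_cast h'
      have hg2 : g • q0 = g • (m0 • u + n0 • v) := by
        rw [hbase, ha', hb']; module
      have hc1 := congrArg Prod.fst hg2
      have hc2 := congrArg Prod.snd hg2
      simp only [Prod.smul_fst, Prod.smul_snd, smul_eq_mul] at hc1 hc2
      apply Prod.ext
      · exact mul_left_cancel₀ h0 hc1
      · exact mul_left_cancel₀ h0 hc2
    have hreprq0 : toR q0 = (fα + m0) • toR u + (fβ + n0) • toR v := by
      rw [hq0R]; congr 1
      · congr 1; rw [hfα]; ring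
      · congr 1; rw [hfβ]; ring
    by_cases hcase : fα + fβ ≤ 1
    · set pt : ℤ × ℤ := q + q0 - m0 • u - n0 • v with hpt
      have htoRpt : toR pt = toR q + fα • toR u + fβ • toR v := by
        rw [hpt, toR_sub, toR_sub, toR_add, toR_smul, toR_smul, hreprq0]
        module
      have hmem : toR pt ∈ convexHull ℝ ({toR q, toR (q+u), toR (q+v)} : Set (ℝ × ℝ)) := by
        refine mem_hull3_iff.2 ⟨1 - fα - fβ, fα, fβ, by linarith, hfα0, hfβ0, by ring, ?_⟩
        rw [toR_add, toR_add, htoRpt]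
        module
      rcases hemp pt hmem with h | h | h
      · have h' := congrArg toR h
        rw [htoRpt] at h'
        have hz : fα • toR u + fβ • toR v = 0 := by
          have hh : fα • toR u + fβ • toR v
              = (toR q + fα • toR u + fβ • toR v) - toR q := by module
          rw [hh, h', sub_self]
        exact absurd ⟨(coords_unique hUV hgne hz).1, (coords_unique hUV hgne hz).2⟩ hnotboth
      · have h' := congrArg toR h
        rw [htoRpt, toR_add] at h'
        have hz : (fα - 1) • toR u + fβ • toR v = 0 := by
          have hh : (fα - 1) • toR u + fβ • toR v
              = (toR q + fα • toR u + fβ • toR v) - (toR q + toR u) := by module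
          rw [hh, h', sub_self]
        have := (coords_unique hUV hgne hz).1
        linarith
      · have h' := congrArg toR h
        rw [htoRpt, toR_add] at h'
        have hz : fα • toR u + (fβ - 1) • toR v = 0 := by
          have hh : fα • toR u + (fβ - 1) • toR v
              = (toR q + fα • toR u + fβ • toR v) - (toR q + toR v) := by module
          rw [hh, h', sub_self]
        have := (coords_unique hUV hgne hz).2
        linarith
    · push_neg at hcase
      set pt : ℤ × ℤ := q + m0 • u + n0 • v + u + v - q0 with hpt
      have htoRpt : toR pt = toR q + (1-fα) • toR u + (1-fβ) • toR v := by
        rw [hpt, toR_sub, toR_add, toR_add, toR_add, toR_add, toR_smul, toR_smul, hreprq0]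
        module
      have hmem : toR pt ∈ convexHull ℝ ({toR q, toR (q+u), toR (q+v)} : Set (ℝ × ℝ)) := by
        refine mem_hull3_iff.2 ⟨fα + fβ - 1, 1 - fα, 1 - fβ,
          by linarith, by linarith, by linarith, by ring, ?_⟩
        rw [toR_add, toR_add, htoRpt]
        module
      rcases hemp pt hmem with h | h | h
      · have h' := congrArg toR h
        rw [htoRpt] at h'
        have hz : (1-fα) • toR u + (1-fβ) • toR v = 0 := by
          have hh : (1-fα) • toR u + (1-fβ) • toR v
              = (toR q + (1-fα) • toR u + (1-fβ) • toR v) - toR q := by module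
          rw [hh, h', sub_self]
        have := (coords_unique hUV hgne hz).1
        linarith
      · have h' := congrArg toR h
        rw [htoRpt, toR_add] at h'
        have hz : (-fα) • toR u + (1-fβ) • toR v = 0 := by
          have hh : (-fα) • toR u + (1-fβ) • toR v
              = (toR q + (1-fα) • toR u + (1-fβ) • toR v) - (toR q + toR u) := by module
          rw [hh, h', sub_self]
        have := (coords_unique hUV hgne hz).2
        linarith
      · have h' := congrArg toR h
        rw [htoRpt, toR_add] at h'
        have hz : (1-fα) • toR u + (-fβ) • toR v = 0 := by
          have hh : (1-fα) • toR u + (-fβ) • toR v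
              = (toR q + (1-fα) • toR u + (1-fβ) • toR v) - (toR q + toR v) := by module
          rw [hh, h', sub_self]
        have := (coords_unique hUV hgne hz).1
        linarith

lemma convex_hp (a b d : ℝ) : Convex ℝ {x : ℝ × ℝ | a*x.1+b*x.2 ≤ d} := by
  intro x hx y hy s t hs ht hst
  simp only [mem_setOf_eq, Prod.fst_add, Prod.snd_add, Prod.smul_fst, Prod.smul_snd,
    smul_eq_mul] at *
  have hd : d = s*d + t*d := by rw [← add_mul, hst, one_mul]
  nlinarith [mul_le_mul_of_nonneg_left hx hs, mul_le_mul_of_nonneg_left hy ht]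

lemma interior_hp (a b d : ℝ) (hab : a ≠ 0 ∨ b ≠ 0) :
    interior {x : ℝ × ℝ | a*x.1+b*x.2 ≤ d} = {x | a*x.1+b*x.2 < d} := by
  have hcont : Continuous fun x : ℝ × ℝ => a*x.1+b*x.2 :=
    (continuous_const.mul continuous_fst).add (continuous_const.mul continuous_snd)
  have hsq : 0 < a^2 + b^2 := by
    rcases hab with h | h
    · have := pow_pos (abs_pos.2 h) 2
      nlinarith [sq_nonneg b, sq_abs a]
    · have := pow_pos (abs_pos.2 h) 2
      nlinarith [sq_nonneg a, sq_abs b]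
  apply Subset.antisymm
  · intro x hx
    have hle : x ∈ {x : ℝ × ℝ | a*x.1+b*x.2 ≤ d} := interior_subset hx
    simp only [mem_setOf_eq] at hle
    rcases lt_or_eq_of_le hle with h | h
    · exact h
    · exfalso
      have hmem : {x : ℝ × ℝ | a*x.1+b*x.2 ≤ d} ∈ nhds x := mem_interior_iff_mem_nhds.1 hx
      have hg : Continuous fun δ : ℝ => ((x.1 + δ*a, x.2 + δ*b) : ℝ × ℝ) := by
        apply Continuous.prodMk <;> continuity
      have hpre : (fun δ : ℝ => ((x.1 + δ*a, x.2 + δ*b) : ℝ × ℝ)) ⁻¹'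
          {x : ℝ × ℝ | a*x.1+b*x.2 ≤ d} ∈ nhds (0:ℝ) := by
        apply hg.continuousAt.preimage_mem_nhds
        simpa using hmem
      obtain ⟨η, hη, hsub⟩ := Metric.mem_nhds_iff.1 hpre
      have hball : (η/2 : ℝ) ∈ Metric.ball (0:ℝ) η := by
        rw [Metric.mem_ball, Real.dist_eq, sub_zero, abs_of_pos (by linarith)]
        linarith
      have := hsub hball
      simp only [mem_preimage, mem_setOf_eq] at this
      nlinarith
  · apply interior_maximal
    · intro x hx
      simp only [mem_setOf_eq] at *
      exact le_of_lt hx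
    · exact isOpen_lt hcont continuous_const
def Sf (o V : ℝ × ℝ) (e : ℝ) (x : ℝ × ℝ) : ℝ := e * ((x.1 - o.1) * V.2 - (x.2 - o.2) * V.1)
def Tf (o U : ℝ × ℝ) (e : ℝ) (x : ℝ × ℝ) : ℝ := e * ((x.2 - o.2) * U.1 - (x.1 - o.1) * U.2)
def HS (o U V : ℝ × ℝ) (e α β c : ℝ) : Set (ℝ × ℝ) :=
  {x | α * Sf o V e x + β * Tf o U e x ≤ c}
def HSlt (o U V : ℝ × ℝ) (e α β c : ℝ) : Set (ℝ × ℝ) :=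
  {x | α * Sf o V e x + β * Tf o U e x < c}

lemma Sf_pt (o U V : ℝ × ℝ) (e σ τ : ℝ) (h1 : U.1*V.2 - U.2*V.1 = e) (he : e*e = 1) :
    Sf o V e (o + σ • U + τ • V) = σ := by
  simp only [Sf, Prod.fst_add, Prod.snd_add, Prod.smul_fst, Prod.smul_snd, smul_eq_mul]
  linear_combination (e*σ) * h1 + σ * he

lemma Tf_pt (o U V : ℝ × ℝ) (e σ τ : ℝ) (h1 : U.1*V.2 - U.2*V.1 = e) (he : e*e = 1) :
    Tf o U e (o + σ • U + τ • V) = τ := by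
  simp only [Tf, Prod.fst_add, Prod.snd_add, Prod.smul_fst, Prod.smul_snd, smul_eq_mul]
  linear_combination (e*τ) * h1 + τ * he

lemma repr_pt (o U V : ℝ × ℝ) (e : ℝ) (h1 : U.1*V.2 - U.2*V.1 = e) (he : e*e = 1) (x : ℝ × ℝ) :
    x = o + Sf o V e x • U + Tf o U e x • V := by
  have hS : Sf o V e x = e * ((x.1 - o.1) * V.2 - (x.2 - o.2) * V.1) := rfl
  have hT : Tf o U e x = e * ((x.2 - o.2) * U.1 - (x.1 - o.1) * U.2) := rfl
  apply Prod.ext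
  · simp only [Prod.fst_add, Prod.smul_fst, smul_eq_mul, hS, hT]
    linear_combination (-e*(x.1-o.1)) * h1 - (x.1-o.1) * he
  · simp only [Prod.snd_add, Prod.smul_snd, smul_eq_mul, hS, hT]
    linear_combination (-e*(x.2-o.2)) * h1 - (x.2-o.2) * he

lemma HS_eq (o U V : ℝ × ℝ) (e α β c : ℝ) :
    HS o U V e α β c = {x : ℝ × ℝ | (e*(α*V.2-β*U.2))*x.1 + (e*(β*U.1-α*V.1))*x.2 ≤
      c + (e*(α*V.2-β*U.2))*o.1 + (e*(β*U.1-α*V.1))*o.2} := by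
  ext x
  simp only [HS, Sf, Tf, mem_setOf_eq]
  constructor <;> intro h <;> nlinarith [h]

lemma HSlt_eq (o U V : ℝ × ℝ) (e α β c : ℝ) :
    HSlt o U V e α β c = {x : ℝ × ℝ | (e*(α*V.2-β*U.2))*x.1 + (e*(β*U.1-α*V.1))*x.2 <
      c + (e*(α*V.2-β*U.2))*o.1 + (e*(β*U.1-α*V.1))*o.2} := by
  ext x
  simp only [HSlt, Sf, Tf, mem_setOf_eq]
  constructor <;> intro h <;> nlinarith [h]

lemma convex_HS (o U V : ℝ × ℝ) (e α β c : ℝ) : Convex ℝ (HS o U V e α β c) := by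
  rw [HS_eq]; exact convex_hp _ _ _

lemma coeff_ne (U V : ℝ × ℝ) (e α β : ℝ) (h1 : U.1*V.2 - U.2*V.1 = e) (he : e ≠ 0)
    (hab : ¬(α = 0 ∧ β = 0)) :
    (e*(α*V.2-β*U.2)) ≠ 0 ∨ (e*(β*U.1-α*V.1)) ≠ 0 := by
  by_contra hcon
  push_neg at hcon
  obtain ⟨hA, hB⟩ := hcon
  have eq1 : α*V.2-β*U.2 = 0 := by
    rcases mul_eq_zero.1 hA with h | h
    · exact absurd h he
    · exact h
  have eq2 : β*U.1-α*V.1 = 0 := by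
    rcases mul_eq_zero.1 hB with h | h
    · exact absurd h he
    · exact h
  have hα : α * e = 0 := by linear_combination (-α)*h1 + U.1*eq1 + U.2*eq2
  have hβ : β * e = 0 := by linear_combination (-β)*h1 + V.1*eq1 + V.2*eq2
  exact hab ⟨by rcases mul_eq_zero.1 hα with h|h; exacts [h, absurd h he],
             by rcases mul_eq_zero.1 hβ with h|h; exacts [h, absurd h he]⟩

lemma hull3 (a b c : ℤ × ℤ) : latticeHull ![a,b,c] = convexHull ℝ {toR a, toR b, toR c} := by
  rw [latticeHull, Set.range_comp]
  congr 1
  simp [Matrix.range_cons, Matrix.range_cons_empty, Set.image_insert_eq]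
  ext x; simp; tauto

lemma hull4 (a b c d : ℤ × ℤ) :
    latticeHull ![a,b,c,d] = convexHull ℝ {toR a, toR b, toR c, toR d} := by
  rw [latticeHull, Set.range_comp]
  congr 1
  simp [Matrix.range_cons, Matrix.range_cons_empty, Set.image_insert_eq]
  ext x; simp; tauto

lemma hull5 (a b c d e : ℤ × ℤ) :
    latticeHull ![a,b,c,d,e] = convexHull ℝ {toR a, toR b, toR c, toR d, toR e} := by
  rw [latticeHull, Set.range_comp]
  congr 1
  simp [Matrix.range_cons, Matrix.range_cons_empty, Set.image_insert_eq]
  ext x; simp; tauto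

lemma interior_HS (o U V : ℝ × ℝ) (e α β c : ℝ) (h1 : U.1*V.2 - U.2*V.1 = e)
    (he : e ≠ 0) (hab : ¬(α = 0 ∧ β = 0)) :
    interior (HS o U V e α β c) = HSlt o U V e α β c := by
  rw [HS_eq, HSlt_eq, interior_hp _ _ _ (coeff_ne U V e α β h1 he hab)]

lemma eR_facts (ε : ℤ) (he : ε = 1 ∨ ε = -1) :
    ((ε:ℝ))*((ε:ℝ)) = 1 ∧ ((ε:ℝ)) ≠ 0 := by
  rcases he with h | h <;> rw [h] <;> norm_num

lemma crossR_of_cross (u v : ℤ × ℤ) (ε : ℤ) (hc : cross u v = ε) :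
    (toR u).1*(toR v).2 - (toR u).2*(toR v).1 = (ε:ℝ) := by
  have : ((cross u v : ℤ) : ℝ) = (ε : ℝ) := by exact_mod_cast hc
  rw [← this]
  simp only [cross, toR]
  push_cast
  ring

lemma lattice_repr (O u v : ℤ × ℤ) (ε : ℤ) (hc : cross u v = ε) (he : ε = 1 ∨ ε = -1)
    (p : ℤ × ℤ) : ∃ m n : ℤ, p = O + m • u + n • v := by
  have hε2 : ε * ε = 1 := by rcases he with h | h <;> rw [h] <;> norm_num
  have hb := cross_basis u v (p - O)
  rw [hc] at hb
  have h2 : p - O = (ε * cross (p - O) v) • u + (ε * cross u (p - O)) • v := by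
    have h2' : ε • (ε • (p - O)) = ε • (cross (p - O) v • u + cross u (p - O) • v) := by rw [hb]
    rw [smul_smul, hε2, one_smul, smul_add, smul_smul, smul_smul] at h2'
    exact h2'
  refine ⟨ε * cross (p - O) v, ε * cross u (p - O), ?_⟩
  have h4 := sub_eq_iff_eq_add.1 h2
  conv_lhs => rw [h4]
  abel

lemma toR_comb (O u v : ℤ × ℤ) (m n : ℤ) :
    toR (O + m • u + n • v) = toR O + (m:ℝ) • toR u + (n:ℝ) • toR v := by
  rw [toR_add, toR_add, toR_smul, toR_smul]

lemma mem_HS_pt' {o U V : ℝ × ℝ} {e α β c σ τ : ℝ} {x : ℝ × ℝ}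
    (h1 : U.1*V.2 - U.2*V.1 = e) (hee : e*e = 1)
    (hx : x = o + σ • U + τ • V) (h : α*σ + β*τ ≤ c) : x ∈ HS o U V e α β c := by
  rw [hx]
  simp only [HS, mem_setOf_eq, Sf_pt _ _ _ _ _ _ h1 hee, Tf_pt _ _ _ _ _ _ h1 hee]
  exact h

lemma mem_HSlt_pt' {o U V : ℝ × ℝ} {e α β c σ τ : ℝ} {x : ℝ × ℝ}
    (h1 : U.1*V.2 - U.2*V.1 = e) (hee : e*e = 1)
    (hx : x = o + σ • U + τ • V) (h : α*σ + β*τ < c) : x ∈ HSlt o U V e α β c := by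
  rw [hx]
  simp only [HSlt, mem_setOf_eq, Sf_pt _ _ _ _ _ _ h1 hee, Tf_pt _ _ _ _ _ _ h1 hee]
  exact h

lemma HS_cond' {o U V : ℝ × ℝ} {e α β c σ τ : ℝ} {x : ℝ × ℝ}
    (h1 : U.1*V.2 - U.2*V.1 = e) (hee : e*e = 1)
    (hx : x = o + σ • U + τ • V) (h : x ∈ HS o U V e α β c) : α*σ + β*τ ≤ c := by
  rw [hx] at h
  simpa only [HS, mem_setOf_eq, Sf_pt _ _ _ _ _ _ h1 hee, Tf_pt _ _ _ _ _ _ h1 hee] using h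

lemma HSlt_cond' {o U V : ℝ × ℝ} {e α β c σ τ : ℝ} {x : ℝ × ℝ}
    (h1 : U.1*V.2 - U.2*V.1 = e) (hee : e*e = 1)
    (hx : x = o + σ • U + τ • V) (h : x ∈ HSlt o U V e α β c) : α*σ + β*τ < c := by
  rw [hx] at h
  simpa only [HSlt, mem_setOf_eq, Sf_pt _ _ _ _ _ _ h1 hee, Tf_pt _ _ _ _ _ _ h1 hee] using h

lemma quad_hull (O u v : ℤ × ℤ) (ε : ℤ) (hc : cross u v = ε) (he : ε = 1 ∨ ε = -1) :
    latticeHull ![O+u, O+u+v, O+v, O-u-v]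
      = HS (toR O) (toR u) (toR v) (ε:ℝ) 1 0 1 ∩ HS (toR O) (toR u) (toR v) (ε:ℝ) 0 1 1
        ∩ HS (toR O) (toR u) (toR v) (ε:ℝ) (-2) 1 1
        ∩ HS (toR O) (toR u) (toR v) (ε:ℝ) 1 (-2) 1 := by
  obtain ⟨hee, hene⟩ := eR_facts ε he
  have h1 := crossR_of_cross u v ε hc
  have hv1 : toR (O+u) = toR O + (1:ℝ) • toR u + (0:ℝ) • toR v := by
    rw [toR_add]; module
  have hv2 : toR (O+u+v) = toR O + (1:ℝ) • toR u + (1:ℝ) • toR v := by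
    rw [toR_add, toR_add]; module
  have hv3 : toR (O+v) = toR O + (0:ℝ) • toR u + (1:ℝ) • toR v := by
    rw [toR_add]; module
  have hv4 : toR (O-u-v) = toR O + (-1:ℝ) • toR u + (-1:ℝ) • toR v := by
    rw [toR_sub, toR_sub]; module
  rw [hull4]
  apply Subset.antisymm
  · apply convexHull_min
    · intro y hy
      simp only [mem_insert_iff, mem_singleton_iff] at hy
      rcases hy with rfl | rfl | rfl | rfl
      · exact ⟨⟨⟨mem_HS_pt' h1 hee hv1 (by norm_num), mem_HS_pt' h1 hee hv1 (by norm_num)⟩,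
          mem_HS_pt' h1 hee hv1 (by norm_num)⟩, mem_HS_pt' h1 hee hv1 (by norm_num)⟩
      · exact ⟨⟨⟨mem_HS_pt' h1 hee hv2 (by norm_num), mem_HS_pt' h1 hee hv2 (by norm_num)⟩,
          mem_HS_pt' h1 hee hv2 (by norm_num)⟩, mem_HS_pt' h1 hee hv2 (by norm_num)⟩
      · exact ⟨⟨⟨mem_HS_pt' h1 hee hv3 (by norm_num), mem_HS_pt' h1 hee hv3 (by norm_num)⟩,
          mem_HS_pt' h1 hee hv3 (by norm_num)⟩, mem_HS_pt' h1 hee hv3 (by norm_num)⟩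
      · exact ⟨⟨⟨mem_HS_pt' h1 hee hv4 (by norm_num), mem_HS_pt' h1 hee hv4 (by norm_num)⟩,
          mem_HS_pt' h1 hee hv4 (by norm_num)⟩, mem_HS_pt' h1 hee hv4 (by norm_num)⟩
    · exact (((convex_HS _ _ _ _ _ _ _).inter (convex_HS _ _ _ _ _ _ _)).inter
        (convex_HS _ _ _ _ _ _ _)).inter (convex_HS _ _ _ _ _ _ _)
  · intro x hx
    obtain ⟨⟨⟨hx1, hx2⟩, hx3⟩, hx4⟩ := hx
    have hxrep := repr_pt (toR O) (toR u) (toR v) (ε:ℝ) h1 hee x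
    set σ : ℝ := Sf (toR O) (toR v) (ε:ℝ) x with hσ
    set τ : ℝ := Tf (toR O) (toR u) (ε:ℝ) x with hτ
    have c1 := HS_cond' h1 hee hxrep hx1
    have c2 := HS_cond' h1 hee hxrep hx2
    have c3 := HS_cond' h1 hee hxrep hx3
    have c4 := HS_cond' h1 hee hxrep hx4
    by_cases hst : σ + τ ≤ 1
    · apply convexHull_mono (show ({toR (O+u), toR (O+v), toR (O-u-v)} : Set (ℝ×ℝ)) ⊆
        {toR (O+u), toR (O+u+v), toR (O+v), toR (O-u-v)} by
          intro y hy; simp only [mem_insert_iff, mem_singleton_iff] at hy ⊢; tauto)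
      refine mem_hull3_iff.2 ⟨(1+2*σ-τ)/3, (1+2*τ-σ)/3, (1-σ-τ)/3,
        by linarith, by linarith, by linarith, by ring, ?_⟩
      rw [hv1, hv3, hv4]
      conv_rhs => rw [hxrep]
      module
    · push_neg at hst
      apply convexHull_mono (show ({toR (O+u), toR (O+u+v), toR (O+v)} : Set (ℝ×ℝ)) ⊆
        {toR (O+u), toR (O+u+v), toR (O+v), toR (O-u-v)} by
          intro y hy; simp only [mem_insert_iff, mem_singleton_iff] at hy ⊢; tauto)
      refine mem_hull3_iff.2 ⟨1-τ, σ+τ-1, 1-σ,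
        by linarith, by linarith, by linarith, by ring, ?_⟩
      rw [hv1, hv2, hv3]
      conv_rhs => rw [hxrep]
      module

lemma quad_int (O u v : ℤ × ℤ) (ε : ℤ) (hc : cross u v = ε) (he : ε = 1 ∨ ε = -1) :
    intPts (latticeHull ![O+u, O+u+v, O+v, O-u-v]) = {O} := by
  obtain ⟨hee, hene⟩ := eR_facts ε he
  have h1 := crossR_of_cross u v ε hc
  have hint : interior (latticeHull ![O+u, O+u+v, O+v, O-u-v])
      = HSlt (toR O) (toR u) (toR v) (ε:ℝ) 1 0 1 ∩ HSlt (toR O) (toR u) (toR v) (ε:ℝ) 0 1 1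
        ∩ HSlt (toR O) (toR u) (toR v) (ε:ℝ) (-2) 1 1
        ∩ HSlt (toR O) (toR u) (toR v) (ε:ℝ) 1 (-2) 1 := by
    rw [quad_hull O u v ε hc he, interior_inter, interior_inter, interior_inter,
      interior_HS _ _ _ _ _ _ _ h1 hene (by norm_num),
      interior_HS _ _ _ _ _ _ _ h1 hene (by norm_num),
      interior_HS _ _ _ _ _ _ _ h1 hene (by norm_num),
      interior_HS _ _ _ _ _ _ _ h1 hene (by norm_num)]
  ext p
  simp only [intPts, mem_setOf_eq, mem_singleton_iff, hint]
  obtain ⟨m, n, hmn⟩ := lattice_repr O u v ε hc he p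
  have hrp : toR p = toR O + (m:ℝ) • toR u + (n:ℝ) • toR v := by
    rw [hmn, toR_comb]
  constructor
  · rintro ⟨⟨⟨g1, g2⟩, g3⟩, g4⟩
    have c1 := HSlt_cond' h1 hee hrp g1
    have c2 := HSlt_cond' h1 hee hrp g2
    have c3 := HSlt_cond' h1 hee hrp g3
    have c4 := HSlt_cond' h1 hee hrp g4
    have i1 : m < 1 := by exact_mod_cast (by push_cast at c1 ⊢; linarith : ((m:ℝ)) < 1)
    have i2 : n < 1 := by exact_mod_cast (by push_cast at c2 ⊢; linarith : ((n:ℝ)) < 1)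
    have i3 : -2*m + n < 1 := by
      exact_mod_cast (by push_cast at c3 ⊢; linarith : ((-2*m + n : ℤ) : ℝ) < 1)
    have i4 : m - 2*n < 1 := by
      exact_mod_cast (by push_cast at c4 ⊢; linarith : ((m - 2*n : ℤ) : ℝ) < 1)
    have hm0 : m = 0 ∧ n = 0 := by omega
    rw [hmn, hm0.1, hm0.2]
    simp
  · intro hpO
    rw [hpO]
    have hrO : toR O = toR O + (0:ℝ) • toR u + (0:ℝ) • toR v := by module
    exact ⟨⟨⟨mem_HSlt_pt' h1 hee hrO (by norm_num), mem_HSlt_pt' h1 hee hrO (by norm_num)⟩,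
      mem_HSlt_pt' h1 hee hrO (by norm_num)⟩, mem_HSlt_pt' h1 hee hrO (by norm_num)⟩

lemma pent_hull (O u v : ℤ × ℤ) (ε : ℤ) (hc : cross u v = ε) (he : ε = 1 ∨ ε = -1) :
    latticeHull ![O+u, O+u+v, O+v, O-u, O-u-v]
      = HS (toR O) (toR u) (toR v) (ε:ℝ) 1 0 1 ∩ HS (toR O) (toR u) (toR v) (ε:ℝ) 0 1 1
        ∩ HS (toR O) (toR u) (toR v) (ε:ℝ) (-1) 1 1
        ∩ HS (toR O) (toR u) (toR v) (ε:ℝ) (-1) 0 1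
        ∩ HS (toR O) (toR u) (toR v) (ε:ℝ) 1 (-2) 1 := by
  obtain ⟨hee, hene⟩ := eR_facts ε he
  have h1 := crossR_of_cross u v ε hc
  have hv1 : toR (O+u) = toR O + (1:ℝ) • toR u + (0:ℝ) • toR v := by
    rw [toR_add]; module
  have hv2 : toR (O+u+v) = toR O + (1:ℝ) • toR u + (1:ℝ) • toR v := by
    rw [toR_add, toR_add]; module
  have hv3 : toR (O+v) = toR O + (0:ℝ) • toR u + (1:ℝ) • toR v := by
    rw [toR_add]; module
  have hv5 : toR (O-u) = toR O + (-1:ℝ) • toR u + (0:ℝ) • toR v := by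
    rw [toR_sub]; module
  have hv4 : toR (O-u-v) = toR O + (-1:ℝ) • toR u + (-1:ℝ) • toR v := by
    rw [toR_sub, toR_sub]; module
  rw [hull5]
  apply Subset.antisymm
  · apply convexHull_min
    · intro y hy
      simp only [mem_insert_iff, mem_singleton_iff] at hy
      rcases hy with rfl | rfl | rfl | rfl | rfl
      · exact ⟨⟨⟨⟨mem_HS_pt' h1 hee hv1 (by norm_num), mem_HS_pt' h1 hee hv1 (by norm_num)⟩,
          mem_HS_pt' h1 hee hv1 (by norm_num)⟩, mem_HS_pt' h1 hee hv1 (by norm_num)⟩,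
          mem_HS_pt' h1 hee hv1 (by norm_num)⟩
      · exact ⟨⟨⟨⟨mem_HS_pt' h1 hee hv2 (by norm_num), mem_HS_pt' h1 hee hv2 (by norm_num)⟩,
          mem_HS_pt' h1 hee hv2 (by norm_num)⟩, mem_HS_pt' h1 hee hv2 (by norm_num)⟩,
          mem_HS_pt' h1 hee hv2 (by norm_num)⟩
      · exact ⟨⟨⟨⟨mem_HS_pt' h1 hee hv3 (by norm_num), mem_HS_pt' h1 hee hv3 (by norm_num)⟩,
          mem_HS_pt' h1 hee hv3 (by norm_num)⟩, mem_HS_pt' h1 hee hv3 (by norm_num)⟩,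
          mem_HS_pt' h1 hee hv3 (by norm_num)⟩
      · exact ⟨⟨⟨⟨mem_HS_pt' h1 hee hv5 (by norm_num), mem_HS_pt' h1 hee hv5 (by norm_num)⟩,
          mem_HS_pt' h1 hee hv5 (by norm_num)⟩, mem_HS_pt' h1 hee hv5 (by norm_num)⟩,
          mem_HS_pt' h1 hee hv5 (by norm_num)⟩
      · exact ⟨⟨⟨⟨mem_HS_pt' h1 hee hv4 (by norm_num), mem_HS_pt' h1 hee hv4 (by norm_num)⟩,
          mem_HS_pt' h1 hee hv4 (by norm_num)⟩, mem_HS_pt' h1 hee hv4 (by norm_num)⟩,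
          mem_HS_pt' h1 hee hv4 (by norm_num)⟩
    · exact ((((convex_HS _ _ _ _ _ _ _).inter (convex_HS _ _ _ _ _ _ _)).inter
        (convex_HS _ _ _ _ _ _ _)).inter (convex_HS _ _ _ _ _ _ _)).inter
        (convex_HS _ _ _ _ _ _ _)
  · intro x hx
    obtain ⟨⟨⟨⟨hx1, hx2⟩, hx3⟩, hx4⟩, hx5⟩ := hx
    have hxrep := repr_pt (toR O) (toR u) (toR v) (ε:ℝ) h1 hee x
    set σ : ℝ := Sf (toR O) (toR v) (ε:ℝ) x with hσ
    set τ : ℝ := Tf (toR O) (toR u) (ε:ℝ) x with hτ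
    have c1 := HS_cond' h1 hee hxrep hx1
    have c2 := HS_cond' h1 hee hxrep hx2
    have c3 := HS_cond' h1 hee hxrep hx3
    have c4 := HS_cond' h1 hee hxrep hx4
    have c5 := HS_cond' h1 hee hxrep hx5
    by_cases hcs : -2*σ + τ ≤ 1
    · have hq : x ∈ latticeHull ![O+u, O+u+v, O+v, O-u-v] := by
        rw [quad_hull O u v ε hc he]
        exact ⟨⟨⟨mem_HS_pt' h1 hee hxrep (by linarith), mem_HS_pt' h1 hee hxrep (by linarith)⟩,
          mem_HS_pt' h1 hee hxrep (by linarith)⟩, mem_HS_pt' h1 hee hxrep (by linarith)⟩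
      rw [hull4] at hq
      refine convexHull_mono (show ({toR (O+u), toR (O+u+v), toR (O+v), toR (O-u-v)} : Set (ℝ×ℝ)) ⊆
        {toR (O+u), toR (O+u+v), toR (O+v), toR (O-u), toR (O-u-v)} by
          intro y hy; simp only [mem_insert_iff, mem_singleton_iff] at hy ⊢; tauto) hq
    · push_neg at hcs
      apply convexHull_mono (show ({toR (O+v), toR (O-u), toR (O-u-v)} : Set (ℝ×ℝ)) ⊆
        {toR (O+u), toR (O+u+v), toR (O+v), toR (O-u), toR (O-u-v)} by
          intro y hy; simp only [mem_insert_iff, mem_singleton_iff] at hy ⊢; tauto)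
      refine mem_hull3_iff.2 ⟨1+σ, -1-2*σ+τ, 1+σ-τ,
        by linarith, by linarith, by linarith, by ring, ?_⟩
      rw [hv3, hv5, hv4]
      conv_rhs => rw [hxrep]
      module

lemma pent_int (O u v : ℤ × ℤ) (ε : ℤ) (hc : cross u v = ε) (he : ε = 1 ∨ ε = -1) :
    intPts (latticeHull ![O+u, O+u+v, O+v, O-u, O-u-v]) = {O} := by
  obtain ⟨hee, hene⟩ := eR_facts ε he
  have h1 := crossR_of_cross u v ε hc
  have hint : interior (latticeHull ![O+u, O+u+v, O+v, O-u, O-u-v])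
      = HSlt (toR O) (toR u) (toR v) (ε:ℝ) 1 0 1 ∩ HSlt (toR O) (toR u) (toR v) (ε:ℝ) 0 1 1
        ∩ HSlt (toR O) (toR u) (toR v) (ε:ℝ) (-1) 1 1
        ∩ HSlt (toR O) (toR u) (toR v) (ε:ℝ) (-1) 0 1
        ∩ HSlt (toR O) (toR u) (toR v) (ε:ℝ) 1 (-2) 1 := by
    rw [pent_hull O u v ε hc he, interior_inter, interior_inter, interior_inter, interior_inter,
      interior_HS _ _ _ _ _ _ _ h1 hene (by norm_num),
      interior_HS _ _ _ _ _ _ _ h1 hene (by norm_num),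
      interior_HS _ _ _ _ _ _ _ h1 hene (by norm_num),
      interior_HS _ _ _ _ _ _ _ h1 hene (by norm_num),
      interior_HS _ _ _ _ _ _ _ h1 hene (by norm_num)]
  ext p
  simp only [intPts, mem_setOf_eq, mem_singleton_iff, hint]
  obtain ⟨m, n, hmn⟩ := lattice_repr O u v ε hc he p
  have hrp : toR p = toR O + (m:ℝ) • toR u + (n:ℝ) • toR v := by
    rw [hmn, toR_comb]
  constructor
  · rintro ⟨⟨⟨⟨g1, g2⟩, g3⟩, g4⟩, g5⟩
    have c1 := HSlt_cond' h1 hee hrp g1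
    have c2 := HSlt_cond' h1 hee hrp g2
    have c3 := HSlt_cond' h1 hee hrp g3
    have c4 := HSlt_cond' h1 hee hrp g4
    have c5 := HSlt_cond' h1 hee hrp g5
    have i1 : m < 1 := by exact_mod_cast (by linarith : ((m:ℝ)) < 1)
    have i2 : n < 1 := by exact_mod_cast (by linarith : ((n:ℝ)) < 1)
    have i3 : -m + n < 1 := by
      exact_mod_cast (by push_cast; linarith : ((-m + n : ℤ) : ℝ) < 1)
    have i4 : -m < 1 := by
      exact_mod_cast (by push_cast; linarith : ((-m : ℤ) : ℝ) < 1)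
    have i5 : m - 2*n < 1 := by
      exact_mod_cast (by push_cast; linarith : ((m - 2*n : ℤ) : ℝ) < 1)
    have hm0 : m = 0 ∧ n = 0 := by omega
    rw [hmn, hm0.1, hm0.2]
    simp
  · intro hpO
    rw [hpO]
    have hrO : toR O = toR O + (0:ℝ) • toR u + (0:ℝ) • toR v := by module
    exact ⟨⟨⟨⟨mem_HSlt_pt' h1 hee hrO (by norm_num), mem_HSlt_pt' h1 hee hrO (by norm_num)⟩,
      mem_HSlt_pt' h1 hee hrO (by norm_num)⟩, mem_HSlt_pt' h1 hee hrO (by norm_num)⟩,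
      mem_HSlt_pt' h1 hee hrO (by norm_num)⟩

lemma par_hull (O u v : ℤ × ℤ) (ε : ℤ) (hc : cross u v = ε) (he : ε = 1 ∨ ε = -1) :
    latticeHull ![O+u, O+u+v, O-u, O-u-v]
      = HS (toR O) (toR u) (toR v) (ε:ℝ) 1 0 1 ∩ HS (toR O) (toR u) (toR v) (ε:ℝ) (-1) 0 1
        ∩ HS (toR O) (toR u) (toR v) (ε:ℝ) (-1) 2 1
        ∩ HS (toR O) (toR u) (toR v) (ε:ℝ) 1 (-2) 1 := by
  obtain ⟨hee, hene⟩ := eR_facts ε he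
  have h1 := crossR_of_cross u v ε hc
  have hv1 : toR (O+u) = toR O + (1:ℝ) • toR u + (0:ℝ) • toR v := by
    rw [toR_add]; module
  have hv2 : toR (O+u+v) = toR O + (1:ℝ) • toR u + (1:ℝ) • toR v := by
    rw [toR_add, toR_add]; module
  have hv5 : toR (O-u) = toR O + (-1:ℝ) • toR u + (0:ℝ) • toR v := by
    rw [toR_sub]; module
  have hv4 : toR (O-u-v) = toR O + (-1:ℝ) • toR u + (-1:ℝ) • toR v := by
    rw [toR_sub, toR_sub]; module
  rw [hull4]
  apply Subset.antisymm
  · apply convexHull_min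
    · intro y hy
      simp only [mem_insert_iff, mem_singleton_iff] at hy
      rcases hy with rfl | rfl | rfl | rfl
      · exact ⟨⟨⟨mem_HS_pt' h1 hee hv1 (by norm_num), mem_HS_pt' h1 hee hv1 (by norm_num)⟩,
          mem_HS_pt' h1 hee hv1 (by norm_num)⟩, mem_HS_pt' h1 hee hv1 (by norm_num)⟩
      · exact ⟨⟨⟨mem_HS_pt' h1 hee hv2 (by norm_num), mem_HS_pt' h1 hee hv2 (by norm_num)⟩,
          mem_HS_pt' h1 hee hv2 (by norm_num)⟩, mem_HS_pt' h1 hee hv2 (by norm_num)⟩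
      · exact ⟨⟨⟨mem_HS_pt' h1 hee hv5 (by norm_num), mem_HS_pt' h1 hee hv5 (by norm_num)⟩,
          mem_HS_pt' h1 hee hv5 (by norm_num)⟩, mem_HS_pt' h1 hee hv5 (by norm_num)⟩
      · exact ⟨⟨⟨mem_HS_pt' h1 hee hv4 (by norm_num), mem_HS_pt' h1 hee hv4 (by norm_num)⟩,
          mem_HS_pt' h1 hee hv4 (by norm_num)⟩, mem_HS_pt' h1 hee hv4 (by norm_num)⟩
    · exact (((convex_HS _ _ _ _ _ _ _).inter (convex_HS _ _ _ _ _ _ _)).inter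
        (convex_HS _ _ _ _ _ _ _)).inter (convex_HS _ _ _ _ _ _ _)
  · intro x hx
    obtain ⟨⟨⟨hx1, hx2⟩, hx3⟩, hx4⟩ := hx
    have hxrep := repr_pt (toR O) (toR u) (toR v) (ε:ℝ) h1 hee x
    set σ : ℝ := Sf (toR O) (toR v) (ε:ℝ) x with hσ
    set τ : ℝ := Tf (toR O) (toR u) (ε:ℝ) x with hτ
    have c1 := HS_cond' h1 hee hxrep hx1
    have c2 := HS_cond' h1 hee hxrep hx2
    have c3 := HS_cond' h1 hee hxrep hx3
    have c4 := HS_cond' h1 hee hxrep hx4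
    by_cases hst : 0 ≤ τ
    · apply convexHull_mono (show ({toR (O+u), toR (O+u+v), toR (O-u)} : Set (ℝ×ℝ)) ⊆
        {toR (O+u), toR (O+u+v), toR (O-u), toR (O-u-v)} by
          intro y hy; simp only [mem_insert_iff, mem_singleton_iff] at hy ⊢; tauto)
      refine mem_hull3_iff.2 ⟨(1+σ-2*τ)/2, τ, (1-σ)/2,
        by linarith, by linarith, by linarith, by ring, ?_⟩
      rw [hv1, hv2, hv5]
      conv_rhs => rw [hxrep]
      module
    · push_neg at hst
      apply convexHull_mono (show ({toR (O+u), toR (O-u), toR (O-u-v)} : Set (ℝ×ℝ)) ⊆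
        {toR (O+u), toR (O+u+v), toR (O-u), toR (O-u-v)} by
          intro y hy; simp only [mem_insert_iff, mem_singleton_iff] at hy ⊢; tauto)
      refine mem_hull3_iff.2 ⟨(1+σ)/2, (1-σ+2*τ)/2, -τ,
        by linarith, by linarith, by linarith, by ring, ?_⟩
      rw [hv1, hv5, hv4]
      conv_rhs => rw [hxrep]
      module

lemma par_interior (O u v : ℤ × ℤ) (ε : ℤ) (hc : cross u v = ε) (he : ε = 1 ∨ ε = -1) :
    interior (latticeHull ![O+u, O+u+v, O-u, O-u-v])
      = HSlt (toR O) (toR u) (toR v) (ε:ℝ) 1 0 1 ∩ HSlt (toR O) (toR u) (toR v) (ε:ℝ) (-1) 0 1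
        ∩ HSlt (toR O) (toR u) (toR v) (ε:ℝ) (-1) 2 1
        ∩ HSlt (toR O) (toR u) (toR v) (ε:ℝ) 1 (-2) 1 := by
  obtain ⟨hee, hene⟩ := eR_facts ε he
  have h1 := crossR_of_cross u v ε hc
  rw [par_hull O u v ε hc he, interior_inter, interior_inter, interior_inter,
    interior_HS _ _ _ _ _ _ _ h1 hene (by norm_num),
    interior_HS _ _ _ _ _ _ _ h1 hene (by norm_num),
    interior_HS _ _ _ _ _ _ _ h1 hene (by norm_num),
    interior_HS _ _ _ _ _ _ _ h1 hene (by norm_num)]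

lemma par_int (O u v : ℤ × ℤ) (ε : ℤ) (hc : cross u v = ε) (he : ε = 1 ∨ ε = -1) :
    intPts (latticeHull ![O+u, O+u+v, O-u, O-u-v]) = {O} := by
  obtain ⟨hee, hene⟩ := eR_facts ε he
  have h1 := crossR_of_cross u v ε hc
  have hint := par_interior O u v ε hc he
  ext p
  simp only [intPts, mem_setOf_eq, mem_singleton_iff, hint]
  obtain ⟨m, n, hmn⟩ := lattice_repr O u v ε hc he p
  have hrp : toR p = toR O + (m:ℝ) • toR u + (n:ℝ) • toR v := by
    rw [hmn, toR_comb]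
  constructor
  · rintro ⟨⟨⟨g1, g2⟩, g3⟩, g4⟩
    have c1 := HSlt_cond' h1 hee hrp g1
    have c2 := HSlt_cond' h1 hee hrp g2
    have c3 := HSlt_cond' h1 hee hrp g3
    have c4 := HSlt_cond' h1 hee hrp g4
    have i1 : m < 1 := by exact_mod_cast (by linarith : ((m:ℝ)) < 1)
    have i2 : -m < 1 := by exact_mod_cast (by push_cast; linarith : ((-m : ℤ) : ℝ) < 1)
    have i3 : -m + 2*n < 1 := by
      exact_mod_cast (by push_cast; linarith : ((-m + 2*n : ℤ) : ℝ) < 1)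
    have i4 : m - 2*n < 1 := by
      exact_mod_cast (by push_cast; linarith : ((m - 2*n : ℤ) : ℝ) < 1)
    have hm0 : m = 0 ∧ n = 0 := by omega
    rw [hmn, hm0.1, hm0.2]
    simp
  · intro hpO
    rw [hpO]
    have hrO : toR O = toR O + (0:ℝ) • toR u + (0:ℝ) • toR v := by module
    exact ⟨⟨⟨mem_HSlt_pt' h1 hee hrO (by norm_num), mem_HSlt_pt' h1 hee hrO (by norm_num)⟩,
      mem_HSlt_pt' h1 hee hrO (by norm_num)⟩, mem_HSlt_pt' h1 hee hrO (by norm_num)⟩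

lemma par_bdry (O u v : ℤ × ℤ) (ε : ℤ) (hc : cross u v = ε) (he : ε = 1 ∨ ε = -1) :
    bdryPts (latticeHull ![O+u, O+u+v, O-u, O-u-v])
      = {O+u, O+u+v, O-u, O-u-v} := by
  obtain ⟨hee, hene⟩ := eR_facts ε he
  have h1 := crossR_of_cross u v ε hc
  have hcl : IsClosed (latticeHull ![O+u, O+u+v, O-u, O-u-v]) := by
    exact Set.Finite.isClosed_convexHull (𝕜 := ℝ) (Set.finite_range _)
  have hfr : frontier (latticeHull ![O+u, O+u+v, O-u, O-u-v])
      = latticeHull ![O+u, O+u+v, O-u, O-u-v]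
        \ interior (latticeHull ![O+u, O+u+v, O-u, O-u-v]) := hcl.frontier_eq
  have hhull := par_hull O u v ε hc he
  have hint := par_interior O u v ε hc he
  ext p
  simp only [bdryPts, mem_setOf_eq, mem_insert_iff, mem_singleton_iff]
  rw [hfr, hint, hhull]
  rw [mem_diff]
  obtain ⟨m, n, hmn⟩ := lattice_repr O u v ε hc he p
  have hrp : toR p = toR O + (m:ℝ) • toR u + (n:ℝ) • toR v := by
    rw [hmn, toR_comb]
  constructor
  · rintro ⟨⟨⟨⟨g1, g2⟩, g3⟩, g4⟩, hni⟩
    have c1 := HS_cond' h1 hee hrp g1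
    have c2 := HS_cond' h1 hee hrp g2
    have c3 := HS_cond' h1 hee hrp g3
    have c4 := HS_cond' h1 hee hrp g4
    have i1 : m ≤ 1 := by exact_mod_cast (by linarith : ((m:ℝ)) ≤ 1)
    have i2 : -m ≤ 1 := by exact_mod_cast (by push_cast; linarith : ((-m : ℤ) : ℝ) ≤ 1)
    have i3 : -m + 2*n ≤ 1 := by
      exact_mod_cast (by push_cast; linarith : ((-m + 2*n : ℤ) : ℝ) ≤ 1)
    have i4 : m - 2*n ≤ 1 := by
      exact_mod_cast (by push_cast; linarith : ((m - 2*n : ℤ) : ℝ) ≤ 1)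
    have hns : ¬ (m = 0 ∧ n = 0) := by
      rintro ⟨rfl, rfl⟩
      apply hni
      have hrO : toR p = toR O + (0:ℝ) • toR u + (0:ℝ) • toR v := by
        rw [hrp]; norm_num
      exact ⟨⟨⟨mem_HSlt_pt' h1 hee hrO (by norm_num), mem_HSlt_pt' h1 hee hrO (by norm_num)⟩,
        mem_HSlt_pt' h1 hee hrO (by norm_num)⟩, mem_HSlt_pt' h1 hee hrO (by norm_num)⟩
    have hcases : (m = 1 ∧ n = 0) ∨ (m = 1 ∧ n = 1) ∨ (m = -1 ∧ n = 0) ∨ (m = -1 ∧ n = -1) := by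
      omega
    rcases hcases with ⟨rfl, rfl⟩ | ⟨rfl, rfl⟩ | ⟨rfl, rfl⟩ | ⟨rfl, rfl⟩
    · left; rw [hmn]; module
    · right; left; rw [hmn]; module
    · right; right; left; rw [hmn]; module
    · right; right; right; rw [hmn]; module
  · intro hp
    have hgen : ∀ m' n' : ℤ, p = O + m' • u + n' • v →
        ((m':ℝ) ≤ 1 ∧ -(m':ℝ) ≤ 1 ∧ -(m':ℝ) + 2*(n':ℝ) ≤ 1 ∧ (m':ℝ) - 2*(n':ℝ) ≤ 1) →
        ¬ ((m':ℝ) < 1 ∧ -(m':ℝ) < 1 ∧ -(m':ℝ) + 2*(n':ℝ) < 1 ∧ (m':ℝ) - 2*(n':ℝ) < 1) →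
        toR p ∈ (HS (toR O) (toR u) (toR v) (ε:ℝ) 1 0 1 ∩ HS (toR O) (toR u) (toR v) (ε:ℝ) (-1) 0 1
          ∩ HS (toR O) (toR u) (toR v) (ε:ℝ) (-1) 2 1 ∩ HS (toR O) (toR u) (toR v) (ε:ℝ) 1 (-2) 1)
          \ (HSlt (toR O) (toR u) (toR v) (ε:ℝ) 1 0 1 ∩ HSlt (toR O) (toR u) (toR v) (ε:ℝ) (-1) 0 1
          ∩ HSlt (toR O) (toR u) (toR v) (ε:ℝ) (-1) 2 1
          ∩ HSlt (toR O) (toR u) (toR v) (ε:ℝ) 1 (-2) 1) := by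
      intro m' n' hmn' hle hnlt
      have hrp' : toR p = toR O + (m':ℝ) • toR u + (n':ℝ) • toR v := by
        rw [hmn', toR_comb]
      constructor
      · exact ⟨⟨⟨mem_HS_pt' h1 hee hrp' (by linarith [hle.1]),
          mem_HS_pt' h1 hee hrp' (by linarith [hle.2.1])⟩,
          mem_HS_pt' h1 hee hrp' (by linarith [hle.2.2.1])⟩,
          mem_HS_pt' h1 hee hrp' (by linarith [hle.2.2.2])⟩
      · rintro ⟨⟨⟨g1, g2⟩, g3⟩, g4⟩
        have c1 := HSlt_cond' h1 hee hrp' g1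
        have c2 := HSlt_cond' h1 hee hrp' g2
        have c3 := HSlt_cond' h1 hee hrp' g3
        have c4 := HSlt_cond' h1 hee hrp' g4
        exact hnlt ⟨by linarith, by linarith, by linarith, by linarith⟩
    rcases hp with rfl | rfl | rfl | rfl
    · exact hgen 1 0 (by module) (by norm_num) (by norm_num)
    · exact hgen 1 1 (by module) (by norm_num) (by norm_num)
    · exact hgen (-1) 0 (by module) (by norm_num) (by norm_num)
    · exact hgen (-1) (-1) (by module) (by norm_num) (by norm_num)

lemma tri_sub_region (O u v : ℤ × ℤ) (ε : ℤ) (hc : cross u v = ε) (he : ε = 1 ∨ ε = -1)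
    {s1 t1 s2 t2 s3 t3 : ℝ} {P1 P2 P3 : ℤ × ℤ}
    (h1' : toR P1 = toR O + s1 • toR u + t1 • toR v)
    (h2' : toR P2 = toR O + s2 • toR u + t2 • toR v)
    (h3' : toR P3 = toR O + s3 • toR u + t3 • toR v)
    (α β c : ℝ)
    (e1 : α*s1 + β*t1 ≤ c) (e2 : α*s2 + β*t2 ≤ c) (e3 : α*s3 + β*t3 ≤ c) :
    tri P1 P2 P3 ⊆ HS (toR O) (toR u) (toR v) (ε:ℝ) α β c := by
  obtain ⟨hee, hene⟩ := eR_facts ε he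
  have h1 := crossR_of_cross u v ε hc
  apply convexHull_min
  · intro y hy
    simp only [mem_insert_iff, mem_singleton_iff] at hy
    rcases hy with rfl | rfl | rfl
    · exact mem_HS_pt' h1 hee h1' e1
    · exact mem_HS_pt' h1 hee h2' e2
    · exact mem_HS_pt' h1 hee h3' e3
  · exact convex_HS _ _ _ _ _ _ _

lemma tri1_empty (O u v : ℤ × ℤ) (ε : ℤ) (hc : cross u v = ε) (he : ε = 1 ∨ ε = -1) :
    EmptyTri (O+u) (O+u+v) (O+v) := by
  obtain ⟨hee, hene⟩ := eR_facts ε he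
  have h1 := crossR_of_cross u v ε hc
  have hv1 : toR (O+u) = toR O + (1:ℝ) • toR u + (0:ℝ) • toR v := by
    rw [toR_add]; module
  have hv2 : toR (O+u+v) = toR O + (1:ℝ) • toR u + (1:ℝ) • toR v := by
    rw [toR_add, toR_add]; module
  have hv3 : toR (O+v) = toR O + (0:ℝ) • toR u + (1:ℝ) • toR v := by
    rw [toR_add]; module
  constructor
  · have hval : cross ((O+u+v) - (O+u)) ((O+v) - (O+u)) = ε := by
      simp only [cross, Prod.fst_add, Prod.snd_add, Prod.fst_sub, Prod.snd_sub]
      simp only [cross] at hc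
      linear_combination hc
    rw [hval]
    rcases he with h | h <;> rw [h] <;> norm_num
  · intro p hp
    obtain ⟨m, n, hmn⟩ := lattice_repr O u v ε hc he p
    have hrp : toR p = toR O + (m:ℝ) • toR u + (n:ℝ) • toR v := by
      rw [hmn, toR_comb]
    have r1 := HS_cond' h1 hee hrp
      (tri_sub_region O u v ε hc he hv1 hv2 hv3 1 0 1 (by norm_num) (by norm_num) (by norm_num) hp)
    have r2 := HS_cond' h1 hee hrp
      (tri_sub_region O u v ε hc he hv1 hv2 hv3 0 1 1 (by norm_num) (by norm_num) (by norm_num) hp)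
    have r3 := HS_cond' h1 hee hrp
      (tri_sub_region O u v ε hc he hv1 hv2 hv3 (-1) (-1) (-1)
        (by norm_num) (by norm_num) (by norm_num) hp)
    have i1 : m ≤ 1 := by exact_mod_cast (by linarith : ((m:ℝ)) ≤ 1)
    have i2 : n ≤ 1 := by exact_mod_cast (by linarith : ((n:ℝ)) ≤ 1)
    have i3 : -m - n ≤ -1 := by
      exact_mod_cast (by push_cast; linarith : ((-m - n : ℤ) : ℝ) ≤ -1)
    have hcases : (m = 1 ∧ n = 0) ∨ (m = 1 ∧ n = 1) ∨ (m = 0 ∧ n = 1) := by omega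
    rcases hcases with ⟨rfl, rfl⟩ | ⟨rfl, rfl⟩ | ⟨rfl, rfl⟩
    · left; rw [hmn]; module
    · right; left; rw [hmn]; module
    · right; right; rw [hmn]; module

lemma tri2_empty (O u v : ℤ × ℤ) (ε : ℤ) (hc : cross u v = ε) (he : ε = 1 ∨ ε = -1) :
    EmptyTri (O+u+v) (O+v) (O-u) := by
  obtain ⟨hee, hene⟩ := eR_facts ε he
  have h1 := crossR_of_cross u v ε hc
  have hv2 : toR (O+u+v) = toR O + (1:ℝ) • toR u + (1:ℝ) • toR v := by
    rw [toR_add, toR_add]; module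
  have hv3 : toR (O+v) = toR O + (0:ℝ) • toR u + (1:ℝ) • toR v := by
    rw [toR_add]; module
  have hv5 : toR (O-u) = toR O + (-1:ℝ) • toR u + (0:ℝ) • toR v := by
    rw [toR_sub]; module
  constructor
  · have hval : cross ((O+v) - (O+u+v)) ((O-u) - (O+u+v)) = ε := by
      simp only [cross, Prod.fst_add, Prod.snd_add, Prod.fst_sub, Prod.snd_sub]
      simp only [cross] at hc
      linear_combination hc
    rw [hval]
    rcases he with h | h <;> rw [h] <;> norm_num
  · intro p hp
    obtain ⟨m, n, hmn⟩ := lattice_repr O u v ε hc he p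
    have hrp : toR p = toR O + (m:ℝ) • toR u + (n:ℝ) • toR v := by
      rw [hmn, toR_comb]
    have r1 := HS_cond' h1 hee hrp
      (tri_sub_region O u v ε hc he hv2 hv3 hv5 0 1 1 (by norm_num) (by norm_num) (by norm_num) hp)
    have r2 := HS_cond' h1 hee hrp
      (tri_sub_region O u v ε hc he hv2 hv3 hv5 (-1) 1 1
        (by norm_num) (by norm_num) (by norm_num) hp)
    have r3 := HS_cond' h1 hee hrp
      (tri_sub_region O u v ε hc he hv2 hv3 hv5 1 (-2) (-1)
        (by norm_num) (by norm_num) (by norm_num) hp)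
    have i1 : n ≤ 1 := by exact_mod_cast (by linarith : ((n:ℝ)) ≤ 1)
    have i2 : -m + n ≤ 1 := by
      exact_mod_cast (by push_cast; linarith : ((-m + n : ℤ) : ℝ) ≤ 1)
    have i3 : m - 2*n ≤ -1 := by
      exact_mod_cast (by push_cast; linarith : ((m - 2*n : ℤ) : ℝ) ≤ -1)
    have hcases : (m = 1 ∧ n = 1) ∨ (m = 0 ∧ n = 1) ∨ (m = -1 ∧ n = 0) := by omega
    rcases hcases with ⟨rfl, rfl⟩ | ⟨rfl, rfl⟩ | ⟨rfl, rfl⟩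
    · left; rw [hmn]; module
    · right; left; rw [hmn]; module
    · right; right; rw [hmn]; module

def FW (W1 W2 : ℤ × ℤ) (d : ℤ) (x : ℝ × ℝ) : ℝ :=
  (d:ℝ)*(((W2.1:ℝ)-(W1.1:ℝ))*(x.2-(W1.2:ℝ)) - ((W2.2:ℝ)-(W1.2:ℝ))*(x.1-(W1.1:ℝ)))

lemma FW_toR (W1 W2 p : ℤ × ℤ) (d : ℤ) :
    FW W1 W2 d (toR p) = ((d * cross (W2 - W1) (p - W1) : ℤ) : ℝ) := by
  simp only [FW, toR, cross, Prod.fst_sub, Prod.snd_sub]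
  push_cast
  ring

lemma FW_as_hp (W1 W2 : ℤ × ℤ) (d K : ℤ) :
    {x : ℝ × ℝ | FW W1 W2 d x ≤ (K:ℝ)}
      = {x : ℝ × ℝ | (-(d:ℝ)*((W2.2:ℝ)-(W1.2:ℝ)))*x.1 + ((d:ℝ)*((W2.1:ℝ)-(W1.1:ℝ)))*x.2 ≤
          (K:ℝ) + (d:ℝ)*((W2.1:ℝ)-(W1.1:ℝ))*(W1.2:ℝ) - (d:ℝ)*((W2.2:ℝ)-(W1.2:ℝ))*(W1.1:ℝ)} := by
  ext x
  simp only [FW, mem_setOf_eq]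
  constructor <;> intro h <;> nlinarith [h]

lemma hull_FW_le {W1 W2 P1 P2 P3 : ℤ × ℤ} {d K : ℤ}
    (e1 : d * cross (W2 - W1) (P1 - W1) ≤ K)
    (e2 : d * cross (W2 - W1) (P2 - W1) ≤ K)
    (e3 : d * cross (W2 - W1) (P3 - W1) ≤ K) :
    convexHull ℝ ({toR P1, toR P2, toR P3} : Set (ℝ × ℝ)) ⊆ {x | FW W1 W2 d x ≤ (K:ℝ)} := by
  rw [FW_as_hp]
  apply convexHull_min
  · intro y hy
    simp only [mem_insert_iff, mem_singleton_iff] at hy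
    have key : ∀ p : ℤ × ℤ, d * cross (W2 - W1) (p - W1) ≤ K →
        (-(d:ℝ)*((W2.2:ℝ)-(W1.2:ℝ)))*(toR p).1 + ((d:ℝ)*((W2.1:ℝ)-(W1.1:ℝ)))*(toR p).2 ≤
          (K:ℝ) + (d:ℝ)*((W2.1:ℝ)-(W1.1:ℝ))*(W1.2:ℝ) - (d:ℝ)*((W2.2:ℝ)-(W1.2:ℝ))*(W1.1:ℝ) := by
      intro p hpK
      have h1 : FW W1 W2 d (toR p) ≤ (K:ℝ) := by
        rw [FW_toR]; exact_mod_cast hpK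
      simp only [FW] at h1
      nlinarith [h1]
    rcases hy with rfl | rfl | rfl
    · exact key P1 e1
    · exact key P2 e2
    · exact key P3 e3
  · exact convex_hp _ _ _

lemma interior_FW_lt {W1 W2 P1 P2 P3 : ℤ × ℤ} {d K : ℤ}
    (e1 : d * cross (W2 - W1) (P1 - W1) ≤ K)
    (e2 : d * cross (W2 - W1) (P2 - W1) ≤ K)
    (e3 : d * cross (W2 - W1) (P3 - W1) ≤ K)
    (hd : d ≠ 0) (hW : W1 ≠ W2) :
    interior (convexHull ℝ ({toR P1, toR P2, toR P3} : Set (ℝ × ℝ)))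
      ⊆ {x | FW W1 W2 d x < (K:ℝ)} := by
  have hsub := hull_FW_le e1 e2 e3
  have hco : (-(d:ℝ)*((W2.2:ℝ)-(W1.2:ℝ))) ≠ 0 ∨ ((d:ℝ)*((W2.1:ℝ)-(W1.1:ℝ))) ≠ 0 := by
    by_contra hcon
    push_neg at hcon
    obtain ⟨hA, hB⟩ := hcon
    have hdR : (d:ℝ) ≠ 0 := Int.cast_ne_zero.2 hd
    have h2 : (W2.2:ℝ) = (W1.2:ℝ) := by
      rcases mul_eq_zero.1 hA with h | h
      · exact absurd (by simpa using h) hdR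
      · linarith [sub_eq_zero.1 h]
    have h1 : (W2.1:ℝ) = (W1.1:ℝ) := by
      rcases mul_eq_zero.1 hB with h | h
      · exact absurd h hdR
      · linarith [sub_eq_zero.1 h]
    apply hW
    apply Prod.ext
    · exact_mod_cast h1.symm
    · exact_mod_cast h2.symm
  have := interior_mono hsub
  rw [FW_as_hp, interior_hp _ _ _ hco] at this
  refine this.trans ?_
  intro x hx
  simp only [mem_setOf_eq, FW] at hx ⊢
  nlinarith [hx]

lemma crossZ_self (x : ℤ × ℤ) : cross x x = 0 := by
  simp [cross]; ring

lemma crossZ_sub_self (x y : ℤ × ℤ) : cross x (y - y) = 0 := by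
  simp [cross]

lemma structure_lemma (A B C O : ℤ × ℤ) (hnd : cross (B - A) (C - A) ≠ 0)
    (hbd : bdryPts (latticeHull ![A, B, C]) = {A, B, C})
    (hint : intPts (latticeHull ![A, B, C]) = {O}) :
    ∃ ε : ℤ, (ε = 1 ∨ ε = -1) ∧ cross (A - O) (B - O) = ε ∧
      C = O - (A - O) - (B - O) := by
  set d := cross (B - A) (C - A) with hd
  have hcl : IsClosed (latticeHull ![A, B, C]) := Set.Finite.isClosed_convexHull (𝕜 := ℝ) (Set.finite_range _)
  have hOint : toR O ∈ interior (latticeHull ![A, B, C]) := by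
    have : O ∈ intPts (latticeHull ![A, B, C]) := by rw [hint]; rfl
    exact this
  have hlat : ∀ p : ℤ × ℤ, toR p ∈ latticeHull ![A, B, C] → p = A ∨ p = B ∨ p = C ∨ p = O := by
    intro p hp
    by_cases hpi : toR p ∈ interior (latticeHull ![A, B, C])
    · right; right; right
      have hmem : p ∈ intPts (latticeHull ![A, B, C]) := hpi
      rw [hint] at hmem
      exact hmem
    · have hmem : p ∈ bdryPts (latticeHull ![A, B, C]) := by
        show toR p ∈ frontier _
        rw [hcl.frontier_eq]
        exact ⟨hp, hpi⟩
      rw [hbd] at hmem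
      simp only [mem_insert_iff, mem_singleton_iff] at hmem
      tauto
  have hh3 := hull3 A B C
  rw [hh3] at hOint hcl hlat
  -- identities
  have idBC : cross (C - B) (A - B) = d := by
    rw [hd]; simp only [cross, Prod.fst_sub, Prod.snd_sub]; ring
  have idCA : cross (A - C) (B - C) = d := by
    rw [hd]; simp only [cross, Prod.fst_sub, Prod.snd_sub]; ring
  have idAB : cross (B - A) (C - A) = d := by rw [hd]
  have idOBC : cross (C - B) (O - B) = cross (B - O) (C - O) := by
    simp only [cross, Prod.fst_sub, Prod.snd_sub]; ring
  have idOCA : cross (A - C) (O - C) = cross (C - O) (A - O) := by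
    simp only [cross, Prod.fst_sub, Prod.snd_sub]; ring
  have idOAB : cross (B - A) (O - A) = cross (A - O) (B - O) := by
    simp only [cross, Prod.fst_sub, Prod.snd_sub]; ring
  have hsum : cross (B - O) (C - O) + cross (C - O) (A - O) + cross (A - O) (B - O) = d := by
    rw [hd]; simp only [cross, Prod.fst_sub, Prod.snd_sub]; ring
  have hdneg : -d ≠ 0 := neg_ne_zero.2 hnd
  have hnddd : (-d) * d ≤ 0 := by nlinarith [mul_self_nonneg d]
  -- corner positivity: generic pattern
  have hBC : B ≠ C := by
    intro h
    apply hnd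
    rw [hd, h]
    exact crossZ_self _
  have hCA : C ≠ A := by
    intro h
    apply hnd
    rw [hd, h]
    exact crossZ_sub_self _ _
  have hAB : A ≠ B := by
    intro h
    apply hnd
    rw [hd, h]
    simp [cross]
  -- 0 < d * ea
  have hea : 0 < d * cross (B - O) (C - O) := by
    have hlt := interior_FW_lt (W1 := B) (W2 := C) (d := -d) (K := 0)
      (P1 := A) (P2 := B) (P3 := C)
      (by rw [idBC]; exact_mod_cast hnddd)
      (by rw [crossZ_sub_self (C-B) B]; simp)
      (by rw [crossZ_self (C-B)]; simp)
      hdneg hBC hOint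
    rw [mem_setOf_eq, FW_toR] at hlt
    have hint2 : (-d) * cross (C - B) (O - B) < 0 := by exact_mod_cast hlt
    rw [idOBC] at hint2
    nlinarith
  have heb : 0 < d * cross (C - O) (A - O) := by
    have hperm : ({toR A, toR B, toR C} : Set (ℝ × ℝ)) = {toR B, toR C, toR A} := by
      ext y; simp only [mem_insert_iff, mem_singleton_iff]; tauto
    rw [hperm] at hOint
    have hlt := interior_FW_lt (W1 := C) (W2 := A) (d := -d) (K := 0)
      (P1 := B) (P2 := C) (P3 := A)
      (by rw [idCA]; exact_mod_cast hnddd)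
      (by rw [crossZ_sub_self (A-C) C]; simp)
      (by rw [crossZ_self (A-C)]; simp)
      hdneg hCA hOint
    rw [mem_setOf_eq, FW_toR] at hlt
    have hint2 : (-d) * cross (A - C) (O - C) < 0 := by exact_mod_cast hlt
    rw [idOCA] at hint2
    rw [← hperm] at hOint
    nlinarith
  have hec : 0 < d * cross (A - O) (B - O) := by
    have hlt := interior_FW_lt (W1 := A) (W2 := B) (d := -d) (K := 0)
      (P1 := A) (P2 := B) (P3 := C)
      (by rw [crossZ_sub_self (B-A) A]; simp)
      (by rw [crossZ_self (B-A)]; simp)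
      (by rw [idAB]; exact_mod_cast hnddd)
      hdneg hAB hOint
    rw [mem_setOf_eq, FW_toR] at hlt
    have hint2 : (-d) * cross (B - A) (O - A) < 0 := by exact_mod_cast hlt
    rw [idOAB] at hint2
    nlinarith
  -- triangle hulls inside big hull
  have hsubtri : ∀ X Y : ℤ × ℤ, toR X ∈ ({toR A, toR B, toR C} : Set (ℝ × ℝ)) →
      toR Y ∈ ({toR A, toR B, toR C} : Set (ℝ × ℝ)) →
      convexHull ℝ ({toR O, toR X, toR Y} : Set (ℝ × ℝ))
        ⊆ convexHull ℝ ({toR A, toR B, toR C} : Set (ℝ × ℝ)) := by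
    intro X Y hX hY
    apply convexHull_min
    · intro y hy
      simp only [mem_insert_iff, mem_singleton_iff] at hy
      rcases hy with rfl | rfl | rfl
      · exact interior_subset hOint
      · exact subset_convexHull ℝ _ hX
      · exact subset_convexHull ℝ _ hY
    · exact convex_convexHull ℝ _
  have hmemA : toR A ∈ ({toR A, toR B, toR C} : Set (ℝ × ℝ)) := by simp
  have hmemB : toR B ∈ ({toR A, toR B, toR C} : Set (ℝ × ℝ)) := by simp
  have hmemC : toR C ∈ ({toR A, toR B, toR C} : Set (ℝ × ℝ)) := by simp
  -- emptiness of tri O A B (C excluded)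
  have hCnotOAB : toR C ∉ convexHull ℝ ({toR O, toR A, toR B} : Set (ℝ × ℝ)) := by
    intro hCin
    have hb := hull_FW_le (W1 := A) (W2 := B) (d := d)
      (K := d * cross (A - O) (B - O))
      (P1 := O) (P2 := A) (P3 := B)
      (by rw [idOAB])
      (by rw [crossZ_sub_self (B-A) A]; simp; linarith)
      (by rw [crossZ_self (B-A)]; simp; linarith)
      hCin
    rw [mem_setOf_eq, FW_toR] at hb
    have hble : d * cross (B - A) (C - A) ≤ d * cross (A - O) (B - O) := by exact_mod_cast hb
    rw [idAB] at hble
    have hdd : d * d = d * cross (B - O) (C - O) + d * cross (C - O) (A - O)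
        + d * cross (A - O) (B - O) := by linear_combination (-d) * hsum
    linarith
  have hAnotOBC : toR A ∉ convexHull ℝ ({toR O, toR B, toR C} : Set (ℝ × ℝ)) := by
    intro hAin
    have hb := hull_FW_le (W1 := B) (W2 := C) (d := d)
      (K := d * cross (B - O) (C - O))
      (P1 := O) (P2 := B) (P3 := C)
      (by rw [idOBC])
      (by rw [crossZ_sub_self (C-B) B]; simp; linarith)
      (by rw [crossZ_self (C-B)]; simp; linarith)
      hAin
    rw [mem_setOf_eq, FW_toR] at hb
    have hble : d * cross (C - B) (A - B) ≤ d * cross (B - O) (C - O) := by exact_mod_cast hb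
    rw [idBC] at hble
    have hdd : d * d = d * cross (B - O) (C - O) + d * cross (C - O) (A - O)
        + d * cross (A - O) (B - O) := by linear_combination (-d) * hsum
    linarith
  have hBnotOCA : toR B ∉ convexHull ℝ ({toR O, toR C, toR A} : Set (ℝ × ℝ)) := by
    intro hBin
    have hb := hull_FW_le (W1 := C) (W2 := A) (d := d)
      (K := d * cross (C - O) (A - O))
      (P1 := O) (P2 := C) (P3 := A)
      (by rw [idOCA])
      (by rw [crossZ_sub_self (A-C) C]; simp; linarith)
      (by rw [crossZ_self (A-C)]; simp; linarith)
      hBin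
    rw [mem_setOf_eq, FW_toR] at hb
    have hble : d * cross (A - C) (B - C) ≤ d * cross (C - O) (A - O) := by exact_mod_cast hb
    rw [idCA] at hble
    have hdd : d * d = d * cross (B - O) (C - O) + d * cross (C - O) (A - O)
        + d * cross (A - O) (B - O) := by linear_combination (-d) * hsum
    linarith
  -- unimodularity of the three triangles
  have hecne : cross (A - O) (B - O) ≠ 0 := by
    intro h; rw [h, mul_zero] at hec; exact lt_irrefl _ hec
  have heane : cross (B - O) (C - O) ≠ 0 := by
    intro h; rw [h, mul_zero] at hea; exact lt_irrefl _ hea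
  have hebne : cross (C - O) (A - O) ≠ 0 := by
    intro h; rw [h, mul_zero] at heb; exact lt_irrefl _ heb
  have hqA : O + (A - O) = A := by abel
  have hqB : O + (B - O) = B := by abel
  have hqC : O + (C - O) = C := by abel
  have hec1 : cross (A - O) (B - O) = 1 ∨ cross (A - O) (B - O) = -1 := by
    apply unimod O (A - O) (B - O) hecne
    rw [hqA, hqB]
    intro p hp
    rcases hlat p (hsubtri A B hmemA hmemB hp) with rfl | rfl | rfl | rfl
    · right; left; rfl
    · right; right; rfl
    · exact absurd hp hCnotOAB
    · left; rfl
  have hea1 : cross (B - O) (C - O) = 1 ∨ cross (B - O) (C - O) = -1 := by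
    apply unimod O (B - O) (C - O) heane
    rw [hqB, hqC]
    intro p hp
    rcases hlat p (hsubtri B C hmemB hmemC hp) with rfl | rfl | rfl | rfl
    · exact absurd hp hAnotOBC
    · right; left; rfl
    · right; right; rfl
    · left; rfl
  have heb1 : cross (C - O) (A - O) = 1 ∨ cross (C - O) (A - O) = -1 := by
    apply unimod O (C - O) (A - O) hebne
    rw [hqC, hqA]
    intro p hp
    rcases hlat p (hsubtri C A hmemC hmemA hp) with rfl | rfl | rfl | rfl
    · right; right; rfl
    · exact absurd hp hBnotOCA
    · right; left; rfl
    · left; rfl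
  -- equal signs
  have haec : cross (B - O) (C - O) = cross (A - O) (B - O) := by
    by_contra hne
    have hfl : cross (B - O) (C - O) = -cross (A - O) (B - O) := by
      rcases hea1 with h | h <;> rcases hec1 with h' | h' <;> omega
    rw [hfl, mul_neg] at hea
    linarith
  have hbec : cross (C - O) (A - O) = cross (A - O) (B - O) := by
    by_contra hne
    have hfl : cross (C - O) (A - O) = -cross (A - O) (B - O) := by
      rcases heb1 with h | h <;> rcases hec1 with h' | h' <;> omega
    rw [hfl, mul_neg] at heb
    linarith
  refine ⟨cross (A - O) (B - O), hec1, rfl, ?_⟩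
  -- C = O - (A-O) - (B-O)
  have hb := cross_basis (A - O) (B - O) (C - O)
  have hanti1 : cross (C - O) (B - O) = -cross (B - O) (C - O) := by
    simp only [cross, Prod.fst_sub, Prod.snd_sub]; ring
  have hanti2 : cross (A - O) (C - O) = -cross (C - O) (A - O) := by
    simp only [cross, Prod.fst_sub, Prod.snd_sub]; ring
  rw [hanti1, hanti2, haec, hbec] at hb
  have h1 := congrArg Prod.fst hb
  have h2 := congrArg Prod.snd hb
  simp only [Prod.smul_fst, Prod.smul_snd, Prod.fst_add, Prod.snd_add, Prod.fst_sub,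
    Prod.snd_sub, smul_eq_mul] at h1 h2
  rcases hec1 with h | h <;> rw [h] at h1 h2 <;>
    · apply Prod.ext <;> simp only [Prod.fst_sub, Prod.snd_sub] <;> omega

/-- Case C: a lattice triangle `ABC` with unique interior lattice point `O` and no extra
boundary lattice points can be transformed, by the elementary operations
`ABC → AC'BC → AC'BA'C → AC'A'C` (where `A' = 2O - A`, `C' = 2O - C`), into the
parallelogram `AC'A'C` with center `O`, unique interior lattice point `O` and no extra
boundary lattice points; the added ear triangles `AC'B` and `C'BA'` are empty. -/
theorem stmt_10 (A B C O : ℤ × ℤ) (hnd : cross (B - A) (C - A) ≠ 0)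
    (hbd : bdryPts (latticeHull ![A, B, C]) = {A, B, C})
    (hint : intPts (latticeHull ![A, B, C]) = {O}) :
    EmptyTri A ((2 : ℤ) • O - C) B ∧
    EmptyTri ((2 : ℤ) • O - C) B ((2 : ℤ) • O - A) ∧
    intPts (latticeHull ![A, (2 : ℤ) • O - C, B, C]) = {O} ∧
    intPts (latticeHull ![A, (2 : ℤ) • O - C, B, (2 : ℤ) • O - A, C]) = {O} ∧
    intPts (latticeHull ![A, (2 : ℤ) • O - C, (2 : ℤ) • O - A, C]) = {O} ∧
    bdryPts (latticeHull ![A, (2 : ℤ) • O - C, (2 : ℤ) • O - A, C]) =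
      {A, (2 : ℤ) • O - C, (2 : ℤ) • O - A, C} := by
  obtain ⟨ε, he, hc, hC⟩ := structure_lemma A B C O hnd hbd hint
  set u := A - O with hu
  set v := B - O with hv
  have hA : A = O + u := by rw [hu]; abel
  have hB : B = O + v := by rw [hv]; abel
  have hC2 : (2 : ℤ) • O - C = O + u + v := by rw [hC]; module
  have hA2 : (2 : ℤ) • O - A = O - u := by rw [hA]; module
  rw [hC2, hA2, hA, hB, hC]
  exact ⟨tri1_empty O u v ε hc he, tri2_empty O u v ε hc he, quad_int O u v ε hc he,
    pent_int O u v ε hc he, par_int O u v ε hc he, par_bdry O u v ε hc he⟩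
end

section
/- Let M = ABCD be a convex lattice polygon with exactly 4 boundary lattice points A, B, C, D, exactly one interior lattice point O, where the angle at C is a straight angle (C lies in the interior of segment BD). Let D' = 2O − D and let E be the midpoint of D'B. Then D', E are lattice points and M can be transformed into the parallelogram AD'CD (with center O, no extra boundary lattice points) by the elementary operations ABCD → AEBCD → AD'EBCD → AD'ECD → AD'CD. -/
open Set MeasureTheory

namespace S11

/-- real cross product -/
def rc (u v : ℝ × ℝ) : ℝ := u.1 * v.2 - u.2 * v.1

@[simp] lemma rc_sub (u x w : ℝ × ℝ) :
    rc u (x - w) = (u.1 * x.2 - u.2 * x.1) - (u.1 * w.2 - u.2 * w.1) := by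
  simp [rc, Prod.fst_sub, Prod.snd_sub]; ring

lemma convex_hp (u w : ℝ × ℝ) : Convex ℝ {x : ℝ × ℝ | 0 ≤ rc u (x - w)} := by
  intro x hx y hy s t hs ht hst
  simp only [mem_setOf_eq, rc_sub] at *
  have h1 : (s • x + t • y).1 = s * x.1 + t * y.1 := by
    simp [Prod.fst_add, Prod.smul_fst, smul_eq_mul]
  have h2 : (s • x + t • y).2 = s * x.2 + t * y.2 := by
    simp [Prod.snd_add, Prod.smul_snd, smul_eq_mul]
  rw [h1, h2]
  have key : u.1 * (s * x.2 + t * y.2) - u.2 * (s * x.1 + t * y.1) - (u.1 * w.2 - u.2 * w.1)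
      = s * (u.1 * x.2 - u.2 * x.1 - (u.1 * w.2 - u.2 * w.1))
        + t * (u.1 * y.2 - u.2 * y.1 - (u.1 * w.2 - u.2 * w.1)) := by
    linear_combination (u.1 * w.2 - u.2 * w.1) * hst
  rw [key]
  exact add_nonneg (mul_nonneg hs hx) (mul_nonneg ht hy)

lemma cont_rc (u w : ℝ × ℝ) : Continuous fun x : ℝ × ℝ => rc u (x - w) := by
  simp only [rc_sub]
  fun_prop

lemma isOpen_shp (u w : ℝ × ℝ) : IsOpen {x : ℝ × ℝ | 0 < rc u (x - w)} :=
  isOpen_lt continuous_const (cont_rc u w)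

lemma ne_zero_prod {u : ℝ × ℝ} (hu : u ≠ 0) : u.1 ≠ 0 ∨ u.2 ≠ 0 := by
  by_contra hc
  push_neg at hc
  exact hu (Prod.ext hc.1 hc.2)

lemma interior_hp {u : ℝ × ℝ} (hu : u ≠ 0) (w : ℝ × ℝ) :
    interior {x : ℝ × ℝ | 0 ≤ rc u (x - w)} = {x : ℝ × ℝ | 0 < rc u (x - w)} := by
  classical
  set f : ℝ × ℝ →L[ℝ] ℝ :=
    u.1 • (ContinuousLinearMap.snd ℝ ℝ ℝ) - u.2 • (ContinuousLinearMap.fst ℝ ℝ ℝ) with hf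
  have hfx : ∀ x : ℝ × ℝ, f x = u.1 * x.2 - u.2 * x.1 := by
    intro x; simp [hf, smul_eq_mul]
  have hpos : (0:ℝ) < u.1 ^ 2 + u.2 ^ 2 := by
    rcases ne_zero_prod hu with h | h <;> positivity
  have hsurj : Function.Surjective f := by
    intro y
    refine ⟨(- y * u.2 / (u.1 ^ 2 + u.2 ^ 2), y * u.1 / (u.1 ^ 2 + u.2 ^ 2)), ?_⟩
    rw [hfx]
    field_simp
    ring
  have hset : {x : ℝ × ℝ | 0 ≤ rc u (x - w)} = f ⁻¹' (Ici (u.1 * w.2 - u.2 * w.1)) := by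
    ext x
    simp only [mem_setOf_eq, mem_preimage, mem_Ici, hfx, rc_sub]
    constructor <;> intro h <;> linarith
  have hset2 : {x : ℝ × ℝ | 0 < rc u (x - w)} = f ⁻¹' (Ioi (u.1 * w.2 - u.2 * w.1)) := by
    ext x
    simp only [mem_setOf_eq, mem_preimage, mem_Ioi, hfx, rc_sub]
    constructor <;> intro h <;> linarith
  rw [hset, hset2, ContinuousLinearMap.interior_preimage f hsurj, interior_Ici]

/-- a set contained in a line has empty interior -/
lemma interior_line_empty {u w : ℝ × ℝ} (hu : u ≠ 0) {S : Set (ℝ × ℝ)}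
    (hS : S ⊆ {x | rc u (x - w) = 0}) : interior S = ∅ := by
  have h1 : interior S ⊆ {x : ℝ × ℝ | 0 < rc u (x - w)} := by
    rw [← interior_hp hu w]
    exact interior_mono (fun x hx => le_of_eq (hS hx).symm)
  have h2 : interior S ⊆ {x : ℝ × ℝ | 0 < rc (-u) (x - w)} := by
    rw [← interior_hp (neg_ne_zero.mpr hu) w]
    refine interior_mono (fun x hx => ?_)
    have := hS hx
    simp only [mem_setOf_eq] at this ⊢
    simp only [rc_sub, Prod.fst_neg, Prod.snd_neg] at this ⊢
    linarith
  ext x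
  simp only [mem_empty_iff_false, iff_false]
  intro hx
  have a1 := h1 hx
  have a2 := h2 hx
  simp only [mem_setOf_eq, rc_sub, Prod.fst_neg, Prod.snd_neg] at a1 a2
  linarith

end S11

namespace S11
open Finset in
lemma mem_hull3 {a b c x : ℝ × ℝ} {wa wb wc : ℝ} (ha : 0 ≤ wa) (hb : 0 ≤ wb) (hc : 0 ≤ wc)
    (hsum : wa + wb + wc = 1) (hx : wa • a + wb • b + wc • c = x) :
    x ∈ convexHull ℝ {a, b, c} := by
  have h : Finset.univ.centerMass ![wa, wb, wc] ![a, b, c] ∈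
      convexHull ℝ (Set.range ![a, b, c]) := by
    refine Finset.centerMass_mem_convexHull _ ?_ ?_ ?_
    · intro i _; fin_cases i <;> simpa
    · simp [Fin.sum_univ_three, hsum]
    · intro i _; exact Set.mem_range_self i
  have hrange : Set.range ![a, b, c] ⊆ ({a, b, c} : Set (ℝ × ℝ)) := by
    rintro y ⟨i, rfl⟩; fin_cases i <;> simp
  have hcm : Finset.univ.centerMass ![wa, wb, wc] ![a, b, c] = x := by
    rw [Finset.centerMass]
    simp [Fin.sum_univ_three, hsum, hx]
  rw [hcm] at h
  exact convexHull_mono hrange h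

lemma rc_ne_left {u v : ℝ × ℝ} (h : rc u v ≠ 0) : u ≠ 0 := by
  rintro rfl; simp [rc] at h

lemma hull3_eq (a b c : ℝ × ℝ) (hd : 0 < rc (b - a) (c - a)) :
    convexHull ℝ {a, b, c} =
      {x | 0 ≤ rc (b - a) (x - a) ∧ 0 ≤ rc (c - b) (x - b) ∧ 0 ≤ rc (a - c) (x - c)} := by
  apply Set.Subset.antisymm
  · apply convexHull_min
    · rintro y (rfl | rfl | rfl) <;>
        refine ⟨?_, ?_, ?_⟩ <;>
        · simp only [mem_setOf_eq, rc_sub, Prod.fst_sub, Prod.snd_sub] at hd ⊢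
          nlinarith [hd]
    · have e : {x : ℝ × ℝ | 0 ≤ rc (b - a) (x - a) ∧ 0 ≤ rc (c - b) (x - b) ∧ 0 ≤ rc (a - c) (x - c)}
          = {x : ℝ × ℝ | 0 ≤ rc (b - a) (x - a)} ∩
            ({x : ℝ × ℝ | 0 ≤ rc (c - b) (x - b)} ∩ {x : ℝ × ℝ | 0 ≤ rc (a - c) (x - c)}) := by
        ext x; simp [mem_setOf_eq, Set.mem_inter_iff]
      rw [e]
      exact (convex_hp _ _).inter ((convex_hp _ _).inter (convex_hp _ _))
  · rintro x ⟨h1, h2, h3⟩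
    set d := rc (b - a) (c - a) with hdd
    have hd0 : d ≠ 0 := ne_of_gt hd
    refine mem_hull3 (wa := rc (c - b) (x - b) / d) (wb := rc (a - c) (x - c) / d)
      (wc := rc (b - a) (x - a) / d) (div_nonneg h2 hd.le) (div_nonneg h3 hd.le)
      (div_nonneg h1 hd.le) ?_ ?_
    · field_simp
      simp only [rc_sub, Prod.fst_sub, Prod.snd_sub, hdd]
      ring
    · have hfst : ∀ y : ℝ × ℝ, ∀ r : ℝ, (r • y).1 = r * y.1 := fun y r => rfl
      have hsnd : ∀ y : ℝ × ℝ, ∀ r : ℝ, (r • y).2 = r * y.2 := fun y r => rfl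
      refine Prod.ext ?_ ?_ <;>
      · simp only [Prod.fst_add, Prod.snd_add, hfst, hsnd]
        field_simp
        simp only [rc_sub, Prod.fst_sub, Prod.snd_sub, hdd]
        ring

lemma interior_hull3 (a b c : ℝ × ℝ) (hd : 0 < rc (b - a) (c - a)) :
    interior (convexHull ℝ {a, b, c}) =
      {x | 0 < rc (b - a) (x - a) ∧ 0 < rc (c - b) (x - b) ∧ 0 < rc (a - c) (x - c)} := by
  have hba : (b - a) ≠ 0 := rc_ne_left hd.ne'
  have hcb : (c - b) ≠ 0 := by
    have : rc (c - b) (a - b) ≠ 0 := by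
      have e : rc (c - b) (a - b) = rc (b - a) (c - a) := by
        simp only [rc, Prod.fst_sub, Prod.snd_sub]; ring
      rw [e]; exact hd.ne'
    exact rc_ne_left this
  have hac : (a - c) ≠ 0 := by
    have : rc (a - c) (b - c) ≠ 0 := by
      have e : rc (a - c) (b - c) = rc (b - a) (c - a) := by
        simp only [rc, Prod.fst_sub, Prod.snd_sub]; ring
      rw [e]; exact hd.ne'
    exact rc_ne_left this
  apply Set.Subset.antisymm
  · intro x hx
    have hx1 : x ∈ interior {y : ℝ × ℝ | 0 ≤ rc (b - a) (y - a)} :=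
      interior_mono (by rw [hull3_eq a b c hd]; exact fun y hy => hy.1) hx
    have hx2 : x ∈ interior {y : ℝ × ℝ | 0 ≤ rc (c - b) (y - b)} :=
      interior_mono (by rw [hull3_eq a b c hd]; exact fun y hy => hy.2.1) hx
    have hx3 : x ∈ interior {y : ℝ × ℝ | 0 ≤ rc (a - c) (y - c)} :=
      interior_mono (by rw [hull3_eq a b c hd]; exact fun y hy => hy.2.2) hx
    rw [interior_hp hba] at hx1
    rw [interior_hp hcb] at hx2
    rw [interior_hp hac] at hx3
    exact ⟨hx1, hx2, hx3⟩
  · have hopen : IsOpen {x : ℝ × ℝ | 0 < rc (b - a) (x - a) ∧ 0 < rc (c - b) (x - b) ∧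
        0 < rc (a - c) (x - c)} := by
      have e : {x : ℝ × ℝ | 0 < rc (b - a) (x - a) ∧ 0 < rc (c - b) (x - b) ∧
          0 < rc (a - c) (x - c)}
          = {x : ℝ × ℝ | 0 < rc (b - a) (x - a)} ∩
            ({x : ℝ × ℝ | 0 < rc (c - b) (x - b)} ∩ {x : ℝ × ℝ | 0 < rc (a - c) (x - c)}) := by
        ext x; simp [mem_setOf_eq, Set.mem_inter_iff]
      rw [e]
      exact (isOpen_shp _ _).inter ((isOpen_shp _ _).inter (isOpen_shp _ _))
    rw [← hopen.interior_eq]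
    apply interior_mono
    rw [hull3_eq a b c hd]
    exact fun y hy => ⟨hy.1.le, hy.2.1.le, hy.2.2.le⟩

end S11

namespace S11

lemma toR_inj : Function.Injective toR := by
  intro p q h
  have h1 := congrArg Prod.fst h
  have h2 := congrArg Prod.snd h
  simp only [toR] at h1 h2
  exact Prod.ext (by exact_mod_cast h1) (by exact_mod_cast h2)

@[simp] lemma toR_fst (p : ℤ × ℤ) : (toR p).1 = (p.1 : ℝ) := rfl
@[simp] lemma toR_snd (p : ℤ × ℤ) : (toR p).2 = (p.2 : ℝ) := rfl

lemma rc_toR (u v : ℤ × ℤ) : rc (toR u) (toR v) = (cross u v : ℝ) := by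
  simp only [rc, cross, toR_fst, toR_snd]
  push_cast
  ring

lemma toR_sub (u v : ℤ × ℤ) : toR (u - v) = toR u - toR v := by
  refine Prod.ext ?_ ?_ <;> simp [toR, Prod.fst_sub, Prod.snd_sub]

/-- an integer-affine unimodular transformation of the lattice plane -/
structure Uni where
  m11 : ℤ
  m12 : ℤ
  m21 : ℤ
  m22 : ℤ
  t1 : ℤ
  t2 : ℤ
  ε : ℤ
  hε : ε = 1 ∨ ε = -1
  hdet : m11 * m22 - m12 * m21 = ε

def Uni.app (φ : Uni) (p : ℤ × ℤ) : ℤ × ℤ :=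
  (φ.m11 * p.1 + φ.m12 * p.2 + φ.t1, φ.m21 * p.1 + φ.m22 * p.2 + φ.t2)

def Uni.Φ (φ : Uni) (x : ℝ × ℝ) : ℝ × ℝ :=
  (φ.m11 * x.1 + φ.m12 * x.2 + φ.t1, φ.m21 * x.1 + φ.m22 * x.2 + φ.t2)

lemma Uni.eps_sq (φ : Uni) : φ.ε * φ.ε = 1 := by
  rcases φ.hε with h | h <;> rw [h] <;> norm_num

def Uni.inv (φ : Uni) : Uni where
  m11 := φ.ε * φ.m22
  m12 := -(φ.ε * φ.m12)
  m21 := -(φ.ε * φ.m21)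
  m22 := φ.ε * φ.m11
  t1 := -(φ.ε * φ.m22 * φ.t1 - φ.ε * φ.m12 * φ.t2)
  t2 := -(φ.ε * φ.m11 * φ.t2 - φ.ε * φ.m21 * φ.t1)
  ε := φ.ε
  hε := φ.hε
  hdet := by
    have h := φ.hdet
    have h2 := φ.eps_sq
    linear_combination φ.ε * φ.ε * h + φ.ε * h2

lemma Uni.inv_app (φ : Uni) (p : ℤ × ℤ) : φ.inv.app (φ.app p) = p := by
  have h := φ.hdet
  have h2 := φ.eps_sq
  refine Prod.ext ?_ ?_ <;> simp only [Uni.app, Uni.inv]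
  · linear_combination p.1 * φ.ε * h + p.1 * h2
  · linear_combination p.2 * φ.ε * h + p.2 * h2

lemma Uni.app_inv (φ : Uni) (p : ℤ × ℤ) : φ.app (φ.inv.app p) = p := by
  have h := φ.hdet
  have h2 := φ.eps_sq
  refine Prod.ext ?_ ?_ <;> simp only [Uni.app, Uni.inv]
  · linear_combination (p.1 - φ.t1) * φ.ε * h + (p.1 - φ.t1) * h2
  · linear_combination (p.2 - φ.t2) * φ.ε * h + (p.2 - φ.t2) * h2

lemma Uni.toR_app (φ : Uni) (p : ℤ × ℤ) : toR (φ.app p) = φ.Φ (toR p) := by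
  refine Prod.ext ?_ ?_ <;>
  · simp only [Uni.app, Uni.Φ, toR]
    push_cast
    ring

end S11

namespace S11

lemma Uni.hdetR (φ : Uni) : (φ.m11 : ℝ) * φ.m22 - φ.m12 * φ.m21 = φ.ε := by
  exact_mod_cast φ.hdet

lemma Uni.eps_sqR (φ : Uni) : (φ.ε : ℝ) * φ.ε = 1 := by exact_mod_cast φ.eps_sq

lemma Uni.invΦ_Φ (φ : Uni) (x : ℝ × ℝ) : φ.inv.Φ (φ.Φ x) = x := by
  have h := φ.hdetR
  have h2 := φ.eps_sqR
  refine Prod.ext ?_ ?_ <;> simp only [Uni.Φ, Uni.inv] <;> push_cast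
  · linear_combination x.1 * φ.ε * h + x.1 * h2
  · linear_combination x.2 * φ.ε * h + x.2 * h2

lemma Uni.Φ_invΦ (φ : Uni) (x : ℝ × ℝ) : φ.Φ (φ.inv.Φ x) = x := by
  have h := φ.hdetR
  have h2 := φ.eps_sqR
  refine Prod.ext ?_ ?_ <;> simp only [Uni.Φ, Uni.inv] <;> push_cast
  · linear_combination (x.1 - φ.t1) * φ.ε * h + (x.1 - φ.t1) * h2
  · linear_combination (x.2 - φ.t2) * φ.ε * h + (x.2 - φ.t2) * h2

lemma Uni.contΦ (φ : Uni) : Continuous φ.Φ := by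
  unfold Uni.Φ
  fun_prop

noncomputable def Uni.homeoΦ (φ : Uni) : Homeomorph (ℝ × ℝ) (ℝ × ℝ) where
  toFun := φ.Φ
  invFun := φ.inv.Φ
  left_inv := φ.invΦ_Φ
  right_inv := φ.Φ_invΦ
  continuous_toFun := φ.contΦ
  continuous_invFun := φ.inv.contΦ

noncomputable def Uni.linΦ (φ : Uni) : (ℝ × ℝ) →ₗ[ℝ] (ℝ × ℝ) where
  toFun := fun x => (φ.m11 * x.1 + φ.m12 * x.2, φ.m21 * x.1 + φ.m22 * x.2)
  map_add' := by
    intro x y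
    refine Prod.ext ?_ ?_ <;> simp [Prod.fst_add, Prod.snd_add] <;> ring
  map_smul' := by
    intro r x
    refine Prod.ext ?_ ?_ <;> simp [Prod.smul_fst, Prod.smul_snd, smul_eq_mul] <;> ring

noncomputable def Uni.affΦ (φ : Uni) : (ℝ × ℝ) →ᵃ[ℝ] (ℝ × ℝ) where
  toFun := φ.Φ
  linear := φ.linΦ
  map_vadd' := by
    intro p v
    refine Prod.ext ?_ ?_ <;>
      simp [Uni.Φ, Uni.linΦ, vadd_eq_add, Prod.fst_add, Prod.snd_add] <;> ring

lemma Uni.image_hull (φ : Uni) (S : Set (ℝ × ℝ)) :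
    φ.Φ '' convexHull ℝ S = convexHull ℝ (φ.Φ '' S) := by
  have := φ.affΦ.image_convexHull S
  exact this

lemma Uni.image_interior (φ : Uni) (S : Set (ℝ × ℝ)) :
    φ.Φ '' interior S = interior (φ.Φ '' S) :=
  φ.homeoΦ.image_interior S

lemma Uni.image_frontier (φ : Uni) (S : Set (ℝ × ℝ)) :
    φ.Φ '' frontier S = frontier (φ.Φ '' S) :=
  φ.homeoΦ.image_frontier S

lemma Uni.latticeHull_comp (φ : Uni) {n : ℕ} (V : Fin n → ℤ × ℤ) :
    latticeHull (φ.app ∘ V) = φ.Φ '' latticeHull V := by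
  unfold latticeHull
  rw [φ.image_hull]
  congr 1
  have : toR ∘ (φ.app ∘ V) = φ.Φ ∘ (toR ∘ V) := by
    funext i
    exact φ.toR_app (V i)
  rw [this, Set.range_comp]

lemma Uni.mem_image_Φ (φ : Uni) {T : Set (ℝ × ℝ)} {p : ℤ × ℤ} :
    toR p ∈ φ.Φ '' T ↔ toR (φ.inv.app p) ∈ T := by
  constructor
  · rintro ⟨x, hx, hΦ⟩
    have h1 := φ.invΦ_Φ x
    rw [hΦ] at h1
    rw [φ.inv.toR_app]
    rwa [h1]
  · intro h
    exact ⟨toR (φ.inv.app p), h, by rw [← φ.toR_app, φ.app_inv]⟩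

end S11

namespace S11

lemma Uni.intPts_comp (φ : Uni) {n : ℕ} (V : Fin n → ℤ × ℤ) :
    intPts (latticeHull (φ.app ∘ V)) = φ.app '' intPts (latticeHull V) := by
  ext p
  rw [intPts, mem_setOf_eq, φ.latticeHull_comp, ← φ.image_interior, φ.mem_image_Φ]
  constructor
  · intro h
    exact ⟨φ.inv.app p, h, φ.app_inv p⟩
  · rintro ⟨q, hq, rfl⟩
    rwa [φ.inv_app]

lemma Uni.bdryPts_comp (φ : Uni) {n : ℕ} (V : Fin n → ℤ × ℤ) :
    bdryPts (latticeHull (φ.app ∘ V)) = φ.app '' bdryPts (latticeHull V) := by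
  ext p
  rw [bdryPts, mem_setOf_eq, φ.latticeHull_comp, ← φ.image_frontier, φ.mem_image_Φ]
  constructor
  · intro h
    exact ⟨φ.inv.app p, h, φ.app_inv p⟩
  · rintro ⟨q, hq, rfl⟩
    rwa [φ.inv_app]

lemma Uni.cross_app (φ : Uni) (u v w : ℤ × ℤ) :
    cross (φ.app u - φ.app v) (φ.app w - φ.app v) = φ.ε * cross (u - v) (w - v) := by
  simp only [cross, Uni.app, Prod.fst_sub, Prod.snd_sub]
  linear_combination ((u.1 - v.1) * (w.2 - v.2) - (u.2 - v.2) * (w.1 - v.1)) * φ.hdet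

lemma Uni.eps_ne (φ : Uni) : φ.ε ≠ 0 := by
  rcases φ.hε with h | h <;> rw [h] <;> norm_num

lemma Uni.tri_app (φ : Uni) (a b c : ℤ × ℤ) :
    tri (φ.app a) (φ.app b) (φ.app c) = φ.Φ '' tri a b c := by
  unfold tri
  rw [φ.image_hull]
  congr 1
  rw [Set.image_insert_eq, Set.image_insert_eq, Set.image_singleton,
    ← φ.toR_app, ← φ.toR_app, ← φ.toR_app]

lemma Uni.emptyTri (φ : Uni) {a b c : ℤ × ℤ} (h : EmptyTri a b c) :
    EmptyTri (φ.app a) (φ.app b) (φ.app c) := by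
  constructor
  · rw [φ.cross_app]
    exact mul_ne_zero φ.eps_ne h.1
  · intro p hp
    rw [φ.tri_app, φ.mem_image_Φ] at hp
    rcases h.2 _ hp with h' | h' | h'
    · left; rw [← φ.app_inv p, h']
    · right; left; rw [← φ.app_inv p, h']
    · right; right; rw [← φ.app_inv p, h']

def Uni.comp (ψ φ : Uni) : Uni where
  m11 := ψ.m11 * φ.m11 + ψ.m12 * φ.m21
  m12 := ψ.m11 * φ.m12 + ψ.m12 * φ.m22
  m21 := ψ.m21 * φ.m11 + ψ.m22 * φ.m21
  m22 := ψ.m21 * φ.m12 + ψ.m22 * φ.m22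
  t1 := ψ.m11 * φ.t1 + ψ.m12 * φ.t2 + ψ.t1
  t2 := ψ.m21 * φ.t1 + ψ.m22 * φ.t2 + ψ.t2
  ε := ψ.ε * φ.ε
  hε := by rcases ψ.hε with h1 | h1 <;> rcases φ.hε with h2 | h2 <;> rw [h1, h2] <;> norm_num
  hdet := by
    linear_combination (φ.m11 * φ.m22 - φ.m12 * φ.m21) * ψ.hdet + ψ.ε * φ.hdet

lemma Uni.comp_app (ψ φ : Uni) (p : ℤ × ℤ) : (ψ.comp φ).app p = ψ.app (φ.app p) := by
  refine Prod.ext ?_ ?_ <;> simp only [Uni.app, Uni.comp] <;> ring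

/-- transport of the open segment condition -/
lemma Uni.openSegment_app (φ : Uni) {B C D : ℤ × ℤ}
    (h : toR C ∈ openSegment ℝ (toR B) (toR D)) :
    toR (φ.app C) ∈ openSegment ℝ (toR (φ.app B)) (toR (φ.app D)) := by
  rcases h with ⟨s, t, hs, ht, hst, hC⟩
  refine ⟨s, t, hs, ht, hst, ?_⟩
  have h1 : s * (toR B).1 + t * (toR D).1 = (toR C).1 := by
    have := congrArg Prod.fst hC
    simpa [Prod.fst_add] using this
  have h2 : s * (toR B).2 + t * (toR D).2 = (toR C).2 := by
    have := congrArg Prod.snd hC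
    simpa [Prod.snd_add] using this
  simp only [toR_fst, toR_snd] at h1 h2
  refine Prod.ext ?_ ?_ <;>
    simp only [Prod.fst_add, Prod.snd_add, Prod.smul_fst, Prod.smul_snd, smul_eq_mul,
      φ.toR_app, Uni.Φ, toR_fst, toR_snd] <;> push_cast
  · linear_combination (φ.m11 : ℝ) * h1 + (φ.m12 : ℝ) * h2 + (φ.t1 : ℝ) * hst
  · linear_combination (φ.m21 : ℝ) * h1 + (φ.m22 : ℝ) * h2 + (φ.t2 : ℝ) * hst

end S11

namespace S11

lemma setK4 (u1 w1 u2 w2 u3 w3 u4 w4 : ℝ × ℝ) :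
    {x : ℝ × ℝ | 0 ≤ rc u1 (x - w1) ∧ 0 ≤ rc u2 (x - w2) ∧ 0 ≤ rc u3 (x - w3) ∧
      0 ≤ rc u4 (x - w4)}
    = {x : ℝ × ℝ | 0 ≤ rc u1 (x - w1)} ∩ ({x | 0 ≤ rc u2 (x - w2)} ∩
      ({x | 0 ≤ rc u3 (x - w3)} ∩ {x | 0 ≤ rc u4 (x - w4)})) := by
  ext x; simp [mem_setOf_eq]

lemma convex_K4 (u1 w1 u2 w2 u3 w3 u4 w4 : ℝ × ℝ) :
    Convex ℝ {x : ℝ × ℝ | 0 ≤ rc u1 (x - w1) ∧ 0 ≤ rc u2 (x - w2) ∧ 0 ≤ rc u3 (x - w3) ∧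
      0 ≤ rc u4 (x - w4)} := by
  rw [setK4]
  exact (convex_hp _ _).inter ((convex_hp _ _).inter ((convex_hp _ _).inter (convex_hp _ _)))

lemma interior_K4 {u1 u2 u3 u4 : ℝ × ℝ} (h1 : u1 ≠ 0) (h2 : u2 ≠ 0) (h3 : u3 ≠ 0)
    (h4 : u4 ≠ 0) (w1 w2 w3 w4 : ℝ × ℝ) {H : Set (ℝ × ℝ)}
    (hH : H = {x : ℝ × ℝ | 0 ≤ rc u1 (x - w1) ∧ 0 ≤ rc u2 (x - w2) ∧ 0 ≤ rc u3 (x - w3) ∧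
      0 ≤ rc u4 (x - w4)}) :
    interior H = {x : ℝ × ℝ | 0 < rc u1 (x - w1) ∧ 0 < rc u2 (x - w2) ∧ 0 < rc u3 (x - w3) ∧
      0 < rc u4 (x - w4)} := by
  apply Set.Subset.antisymm
  · intro x hx
    have k1 : x ∈ interior {y : ℝ × ℝ | 0 ≤ rc u1 (y - w1)} :=
      interior_mono (by rw [hH]; exact fun y hy => hy.1) hx
    have k2 : x ∈ interior {y : ℝ × ℝ | 0 ≤ rc u2 (y - w2)} :=
      interior_mono (by rw [hH]; exact fun y hy => hy.2.1) hx
    have k3 : x ∈ interior {y : ℝ × ℝ | 0 ≤ rc u3 (y - w3)} :=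
      interior_mono (by rw [hH]; exact fun y hy => hy.2.2.1) hx
    have k4 : x ∈ interior {y : ℝ × ℝ | 0 ≤ rc u4 (y - w4)} :=
      interior_mono (by rw [hH]; exact fun y hy => hy.2.2.2) hx
    rw [interior_hp h1] at k1
    rw [interior_hp h2] at k2
    rw [interior_hp h3] at k3
    rw [interior_hp h4] at k4
    exact ⟨k1, k2, k3, k4⟩
  · have hopen : IsOpen {x : ℝ × ℝ | 0 < rc u1 (x - w1) ∧ 0 < rc u2 (x - w2) ∧
        0 < rc u3 (x - w3) ∧ 0 < rc u4 (x - w4)} := by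
      have e : {x : ℝ × ℝ | 0 < rc u1 (x - w1) ∧ 0 < rc u2 (x - w2) ∧ 0 < rc u3 (x - w3) ∧
          0 < rc u4 (x - w4)}
          = {x : ℝ × ℝ | 0 < rc u1 (x - w1)} ∩ ({x | 0 < rc u2 (x - w2)} ∩
            ({x | 0 < rc u3 (x - w3)} ∩ {x | 0 < rc u4 (x - w4)})) := by
        ext x; simp [mem_setOf_eq]
      rw [e]
      exact (isOpen_shp _ _).inter ((isOpen_shp _ _).inter
        ((isOpen_shp _ _).inter (isOpen_shp _ _)))
    rw [← hopen.interior_eq]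
    apply interior_mono
    rw [hH]
    exact fun y hy => ⟨hy.1.le, hy.2.1.le, hy.2.2.1.le, hy.2.2.2.le⟩

lemma setK5 (u1 w1 u2 w2 u3 w3 u4 w4 u5 w5 : ℝ × ℝ) :
    {x : ℝ × ℝ | 0 ≤ rc u1 (x - w1) ∧ 0 ≤ rc u2 (x - w2) ∧ 0 ≤ rc u3 (x - w3) ∧
      0 ≤ rc u4 (x - w4) ∧ 0 ≤ rc u5 (x - w5)}
    = {x : ℝ × ℝ | 0 ≤ rc u1 (x - w1)} ∩ ({x | 0 ≤ rc u2 (x - w2)} ∩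
      ({x | 0 ≤ rc u3 (x - w3)} ∩ ({x | 0 ≤ rc u4 (x - w4)} ∩ {x | 0 ≤ rc u5 (x - w5)}))) := by
  ext x; simp [mem_setOf_eq]

lemma convex_K5 (u1 w1 u2 w2 u3 w3 u4 w4 u5 w5 : ℝ × ℝ) :
    Convex ℝ {x : ℝ × ℝ | 0 ≤ rc u1 (x - w1) ∧ 0 ≤ rc u2 (x - w2) ∧ 0 ≤ rc u3 (x - w3) ∧
      0 ≤ rc u4 (x - w4) ∧ 0 ≤ rc u5 (x - w5)} := by
  rw [setK5]
  exact (convex_hp _ _).inter ((convex_hp _ _).inter ((convex_hp _ _).inter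
    ((convex_hp _ _).inter (convex_hp _ _))))

lemma interior_K5 {u1 u2 u3 u4 u5 : ℝ × ℝ} (h1 : u1 ≠ 0) (h2 : u2 ≠ 0) (h3 : u3 ≠ 0)
    (h4 : u4 ≠ 0) (h5 : u5 ≠ 0) (w1 w2 w3 w4 w5 : ℝ × ℝ) {H : Set (ℝ × ℝ)}
    (hH : H = {x : ℝ × ℝ | 0 ≤ rc u1 (x - w1) ∧ 0 ≤ rc u2 (x - w2) ∧ 0 ≤ rc u3 (x - w3) ∧
      0 ≤ rc u4 (x - w4) ∧ 0 ≤ rc u5 (x - w5)}) :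
    interior H = {x : ℝ × ℝ | 0 < rc u1 (x - w1) ∧ 0 < rc u2 (x - w2) ∧ 0 < rc u3 (x - w3) ∧
      0 < rc u4 (x - w4) ∧ 0 < rc u5 (x - w5)} := by
  apply Set.Subset.antisymm
  · intro x hx
    have k1 : x ∈ interior {y : ℝ × ℝ | 0 ≤ rc u1 (y - w1)} :=
      interior_mono (by rw [hH]; exact fun y hy => hy.1) hx
    have k2 : x ∈ interior {y : ℝ × ℝ | 0 ≤ rc u2 (y - w2)} :=
      interior_mono (by rw [hH]; exact fun y hy => hy.2.1) hx
    have k3 : x ∈ interior {y : ℝ × ℝ | 0 ≤ rc u3 (y - w3)} :=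
      interior_mono (by rw [hH]; exact fun y hy => hy.2.2.1) hx
    have k4 : x ∈ interior {y : ℝ × ℝ | 0 ≤ rc u4 (y - w4)} :=
      interior_mono (by rw [hH]; exact fun y hy => hy.2.2.2.1) hx
    have k5 : x ∈ interior {y : ℝ × ℝ | 0 ≤ rc u5 (y - w5)} :=
      interior_mono (by rw [hH]; exact fun y hy => hy.2.2.2.2) hx
    rw [interior_hp h1] at k1
    rw [interior_hp h2] at k2
    rw [interior_hp h3] at k3
    rw [interior_hp h4] at k4
    rw [interior_hp h5] at k5
    exact ⟨k1, k2, k3, k4, k5⟩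
  · have hopen : IsOpen {x : ℝ × ℝ | 0 < rc u1 (x - w1) ∧ 0 < rc u2 (x - w2) ∧
        0 < rc u3 (x - w3) ∧ 0 < rc u4 (x - w4) ∧ 0 < rc u5 (x - w5)} := by
      have e : {x : ℝ × ℝ | 0 < rc u1 (x - w1) ∧ 0 < rc u2 (x - w2) ∧ 0 < rc u3 (x - w3) ∧
          0 < rc u4 (x - w4) ∧ 0 < rc u5 (x - w5)}
          = {x : ℝ × ℝ | 0 < rc u1 (x - w1)} ∩ ({x | 0 < rc u2 (x - w2)} ∩
            ({x | 0 < rc u3 (x - w3)} ∩ ({x | 0 < rc u4 (x - w4)} ∩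
              {x | 0 < rc u5 (x - w5)}))) := by
        ext x; simp [mem_setOf_eq]
      rw [e]
      exact (isOpen_shp _ _).inter ((isOpen_shp _ _).inter ((isOpen_shp _ _).inter
        ((isOpen_shp _ _).inter (isOpen_shp _ _))))
    rw [← hopen.interior_eq]
    apply interior_mono
    rw [hH]
    exact fun y hy => ⟨hy.1.le, hy.2.1.le, hy.2.2.1.le, hy.2.2.2.1.le, hy.2.2.2.2.le⟩

lemma hull_insert_of_mem {c : ℝ × ℝ} {s : Set (ℝ × ℝ)} (h : c ∈ convexHull ℝ s) :
    convexHull ℝ (insert c s) = convexHull ℝ s :=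
  Set.Subset.antisymm
    (convexHull_min (Set.insert_subset h (subset_convexHull ℝ s)) (convex_convexHull ℝ s))
    (convexHull_mono (Set.subset_insert c s))

lemma range_comp4 {α β : Type*} (f : α → β) (a b c d : α) :
    Set.range (f ∘ ![a, b, c, d]) = {f a, f b, f c, f d} := by
  ext y
  constructor
  · rintro ⟨i, rfl⟩
    fin_cases i <;> simp
  · intro hy
    rcases hy with rfl | rfl | rfl | rfl
    exacts [⟨0, rfl⟩, ⟨1, rfl⟩, ⟨2, rfl⟩, ⟨3, rfl⟩]

lemma range_comp5 {α β : Type*} (f : α → β) (a b c d e : α) :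
    Set.range (f ∘ ![a, b, c, d, e]) = {f a, f b, f c, f d, f e} := by
  ext y
  constructor
  · rintro ⟨i, rfl⟩
    fin_cases i <;> simp
  · intro hy
    rcases hy with rfl | rfl | rfl | rfl | rfl
    exacts [⟨0, rfl⟩, ⟨1, rfl⟩, ⟨2, rfl⟩, ⟨3, rfl⟩, ⟨4, rfl⟩]

lemma range_comp6 {α β : Type*} (f : α → β) (a b c d e g : α) :
    Set.range (f ∘ ![a, b, c, d, e, g]) = {f a, f b, f c, f d, f e, f g} := by
  ext y
  constructor
  · rintro ⟨i, rfl⟩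
    fin_cases i
    · left; rfl
    · right; left; rfl
    · right; right; left; rfl
    · right; right; right; left; rfl
    · right; right; right; right; left; rfl
    · right; right; right; right; right; rfl
  · intro hy
    rcases hy with rfl | rfl | rfl | rfl | rfl | rfl
    exacts [⟨0, rfl⟩, ⟨1, rfl⟩, ⟨2, rfl⟩, ⟨3, rfl⟩, ⟨4, rfl⟩, ⟨5, rfl⟩]

end S11

namespace S11

lemma mem_hull_tri {V : Set (ℝ × ℝ)} {a b c x : ℝ × ℝ} (ha : a ∈ V) (hb : b ∈ V) (hc : c ∈ V)
    (hd : 0 < rc (b - a) (c - a)) (h1 : 0 ≤ rc (b - a) (x - a)) (h2 : 0 ≤ rc (c - b) (x - b))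
    (h3 : 0 ≤ rc (a - c) (x - c)) : x ∈ convexHull ℝ V := by
  have hx : x ∈ convexHull ℝ ({a, b, c} : Set (ℝ × ℝ)) := by
    rw [hull3_eq a b c hd]
    exact ⟨h1, h2, h3⟩
  exact convexHull_mono (by intro y hy; rcases hy with rfl | rfl | rfl <;> assumption) hx

/-- the parallelogram `A D' C D` in model coordinates -/
lemma hullP5 : convexHull ℝ ({toR (1, 2), toR (0, 2), toR (1, 0), toR (2, 0)} : Set (ℝ × ℝ)) =
    {x : ℝ × ℝ | 0 ≤ rc (toR (1, -2)) (x - toR (0, 2)) ∧ 0 ≤ rc (toR (1, 0)) (x - toR (1, 0)) ∧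
      0 ≤ rc (toR (-1, 2)) (x - toR (2, 0)) ∧ 0 ≤ rc (toR (-1, 0)) (x - toR (1, 2))} := by
  apply Set.Subset.antisymm
  · apply convexHull_min
    · rintro y (rfl | rfl | rfl | rfl) <;> refine ⟨?_, ?_, ?_, ?_⟩ <;>
        simp only [mem_setOf_eq, rc_sub, toR_fst, toR_snd] <;> norm_num
    · exact convex_K4 _ _ _ _ _ _ _ _
  · rintro x ⟨h1, h2, h3, h4⟩
    simp only [mem_setOf_eq, rc_sub, toR_fst, toR_snd] at h1 h2 h3 h4
    norm_num at h1 h2 h3 h4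
    rcases le_or_gt (x.1 + x.2) 2 with hs | hs
    · refine mem_hull_tri (a := toR (0, 2)) (b := toR (1, 0)) (c := toR (2, 0))
        (by simp) (by simp) (by simp) ?_ ?_ ?_ ?_ <;>
        simp only [rc_sub, rc, Prod.fst_sub, Prod.snd_sub, toR_fst, toR_snd] <;>
        push_cast <;> norm_num <;> linarith
    · refine mem_hull_tri (a := toR (0, 2)) (b := toR (2, 0)) (c := toR (1, 2))
        (by simp) (by simp) (by simp) ?_ ?_ ?_ ?_ <;>
        simp only [rc_sub, rc, Prod.fst_sub, Prod.snd_sub, toR_fst, toR_snd] <;>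
        push_cast <;> norm_num <;> linarith

end S11

namespace S11

lemma toR_zero : toR 0 = 0 := by
  refine Prod.ext ?_ ?_ <;> simp [toR]

lemma toR_ne_zero {u : ℤ × ℤ} (h : u ≠ 0) : toR u ≠ 0 := by
  intro hc
  exact h (toR_inj (hc.trans toR_zero.symm))

lemma interiorP5 :
    interior (convexHull ℝ ({toR (1, 2), toR (0, 2), toR (1, 0), toR (2, 0)} : Set (ℝ × ℝ))) =
    {x : ℝ × ℝ | 0 < rc (toR (1, -2)) (x - toR (0, 2)) ∧ 0 < rc (toR (1, 0)) (x - toR (1, 0)) ∧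
      0 < rc (toR (-1, 2)) (x - toR (2, 0)) ∧ 0 < rc (toR (-1, 0)) (x - toR (1, 2))} := by
  refine interior_K4 ?_ ?_ ?_ ?_ _ _ _ _ hullP5 <;>
    exact toR_ne_zero (by norm_num [Prod.ext_iff])

lemma strict_toR (u w : ℤ × ℤ) (p : ℤ × ℤ) :
    (0 < rc (toR u) (toR p - toR w)) ↔ 0 < cross u (p - w) := by
  rw [← toR_sub, rc_toR]
  exact_mod_cast Iff.rfl

lemma le_toR (u w : ℤ × ℤ) (p : ℤ × ℤ) :
    (0 ≤ rc (toR u) (toR p - toR w)) ↔ 0 ≤ cross u (p - w) := by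
  rw [← toR_sub, rc_toR]
  exact_mod_cast Iff.rfl

lemma intP5 :
    intPts (convexHull ℝ ({toR (1, 2), toR (0, 2), toR (1, 0), toR (2, 0)} : Set (ℝ × ℝ)))
      = {((1 : ℤ), (1 : ℤ))} := by
  ext p
  simp only [intPts, mem_setOf_eq, interiorP5, strict_toR, mem_singleton_iff]
  simp only [cross, Prod.fst_sub, Prod.snd_sub, Prod.ext_iff]
  constructor
  · rintro ⟨a1, a2, a3, a4⟩
    norm_num at a1 a2 a3 a4 ⊢
    omega
  · rintro ⟨e1, e2⟩
    norm_num [e1, e2]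

lemma bdryP5 :
    bdryPts (convexHull ℝ ({toR (1, 2), toR (0, 2), toR (1, 0), toR (2, 0)} : Set (ℝ × ℝ)))
      = {((1 : ℤ), (2 : ℤ)), ((0 : ℤ), (2 : ℤ)), ((1 : ℤ), (0 : ℤ)), ((2 : ℤ), (0 : ℤ))} := by
  have hcl : IsClosed (convexHull ℝ ({toR (1, 2), toR (0, 2), toR (1, 0), toR (2, 0)}
      : Set (ℝ × ℝ))) :=
    (Set.toFinite _).isClosed_convexHull ℝ
  ext p
  simp only [bdryPts, mem_setOf_eq, hcl.frontier_eq, Set.mem_diff]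
  rw [interiorP5, hullP5]
  simp only [mem_setOf_eq, le_toR, strict_toR, mem_insert_iff, mem_singleton_iff]
  simp only [cross, Prod.fst_sub, Prod.snd_sub, Prod.ext_iff, not_and, not_lt]
  constructor
  · rintro ⟨⟨a1, a2, a3, a4⟩, hn⟩
    norm_num at a1 a2 a3 a4 hn ⊢
    omega
  · intro h
    rcases h with ⟨e1, e2⟩ | ⟨e1, e2⟩ | ⟨e1, e2⟩ | ⟨e1, e2⟩ <;> norm_num [e1, e2]

end S11

namespace S11

lemma mem_hull_combo2 {V : Set (ℝ × ℝ)} {x y : ℝ × ℝ} (hx : x ∈ V) (hy : y ∈ V) {s t : ℝ}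
    (hs : 0 ≤ s) (ht : 0 ≤ t) (hst : s + t = 1) : s • x + t • y ∈ convexHull ℝ V :=
  (convex_convexHull ℝ V) (subset_convexHull ℝ V hx) (subset_convexHull ℝ V hy) hs ht hst

/-- the quadrilateral hull of `A E B C D` in model coordinates -/
lemma hullP2 : convexHull ℝ
    ({toR (1, 2), toR (0, 1), toR (0, 0), toR (1, 0), toR (2, 0)} : Set (ℝ × ℝ)) =
    {x : ℝ × ℝ | 0 ≤ rc (toR (0, -1)) (x - toR (0, 1)) ∧ 0 ≤ rc (toR (2, 0)) (x - toR (0, 0)) ∧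
      0 ≤ rc (toR (-1, 2)) (x - toR (2, 0)) ∧ 0 ≤ rc (toR (-1, -1)) (x - toR (1, 2))} := by
  have hdrop : ({toR (1, 2), toR (0, 1), toR (0, 0), toR (1, 0), toR (2, 0)} : Set (ℝ × ℝ))
      = insert (toR (1, 0)) ({toR (1, 2), toR (0, 1), toR (0, 0), toR (2, 0)} : Set (ℝ × ℝ)) := by
    ext y; simp [mem_insert_iff]; tauto
  have hmid : toR (1, 0) = (1/2 : ℝ) • toR (0, 0) + (1/2 : ℝ) • toR (2, 0) := by
    refine Prod.ext ?_ ?_ <;> norm_num [toR, Prod.smul_fst, Prod.smul_snd, Prod.fst_add,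
      Prod.snd_add]
  have hmem : toR (1, 0) ∈ convexHull ℝ
      ({toR (1, 2), toR (0, 1), toR (0, 0), toR (2, 0)} : Set (ℝ × ℝ)) := by
    rw [hmid]
    exact mem_hull_combo2 (by simp) (by simp) (by norm_num) (by norm_num) (by norm_num)
  rw [hdrop, hull_insert_of_mem hmem]
  apply Set.Subset.antisymm
  · apply convexHull_min
    · rintro y (rfl | rfl | rfl | rfl) <;> refine ⟨?_, ?_, ?_, ?_⟩ <;>
        simp only [mem_setOf_eq, rc_sub, toR_fst, toR_snd] <;> norm_num
    · exact convex_K4 _ _ _ _ _ _ _ _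
  · rintro x ⟨h1, h2, h3, h4⟩
    simp only [mem_setOf_eq, rc_sub, toR_fst, toR_snd] at h1 h2 h3 h4
    norm_num at h1 h2 h3 h4
    rcases le_or_gt (x.1 + 2 * x.2) 2 with hs | hs
    · refine mem_hull_tri (a := toR (0, 1)) (b := toR (0, 0)) (c := toR (2, 0))
        (by simp) (by simp) (by simp) ?_ ?_ ?_ ?_ <;>
        simp only [rc_sub, rc, Prod.fst_sub, Prod.snd_sub, toR_fst, toR_snd] <;>
        push_cast <;> norm_num <;> linarith
    · refine mem_hull_tri (a := toR (0, 1)) (b := toR (2, 0)) (c := toR (1, 2))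
        (by simp) (by simp) (by simp) ?_ ?_ ?_ ?_ <;>
        simp only [rc_sub, rc, Prod.fst_sub, Prod.snd_sub, toR_fst, toR_snd] <;>
        push_cast <;> norm_num <;> linarith

lemma intP2 : intPts (convexHull ℝ
    ({toR (1, 2), toR (0, 1), toR (0, 0), toR (1, 0), toR (2, 0)} : Set (ℝ × ℝ)))
      = {((1 : ℤ), (1 : ℤ))} := by
  have hint := interior_K4 (toR_ne_zero (u := ((0 : ℤ), (-1 : ℤ))) (by norm_num [Prod.ext_iff]))
    (toR_ne_zero (u := ((2 : ℤ), (0 : ℤ))) (by norm_num [Prod.ext_iff]))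
    (toR_ne_zero (u := ((-1 : ℤ), (2 : ℤ))) (by norm_num [Prod.ext_iff]))
    (toR_ne_zero (u := ((-1 : ℤ), (-1 : ℤ))) (by norm_num [Prod.ext_iff]))
    (toR (0, 1)) (toR (0, 0)) (toR (2, 0)) (toR (1, 2)) hullP2
  ext p
  simp only [intPts, mem_setOf_eq, hint, strict_toR, mem_singleton_iff]
  simp only [cross, Prod.fst_sub, Prod.snd_sub, Prod.ext_iff]
  constructor
  · rintro ⟨a1, a2, a3, a4⟩
    norm_num at a1 a2 a3 a4 ⊢
    omega
  · rintro ⟨e1, e2⟩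
    norm_num [e1, e2]

end S11

namespace S11

/-- the quadrilateral hull of `A D' E B C D` in model coordinates -/
lemma hullP3 : convexHull ℝ
    ({toR (1, 2), toR (0, 2), toR (0, 1), toR (0, 0), toR (1, 0), toR (2, 0)} : Set (ℝ × ℝ)) =
    {x : ℝ × ℝ | 0 ≤ rc (toR (0, -2)) (x - toR (0, 2)) ∧ 0 ≤ rc (toR (2, 0)) (x - toR (0, 0)) ∧
      0 ≤ rc (toR (-1, 2)) (x - toR (2, 0)) ∧ 0 ≤ rc (toR (-1, 0)) (x - toR (1, 2))} := by
  have hdrop : ({toR (1, 2), toR (0, 2), toR (0, 1), toR (0, 0), toR (1, 0), toR (2, 0)}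
      : Set (ℝ × ℝ))
      = insert (toR (0, 1)) (insert (toR (1, 0))
        ({toR (1, 2), toR (0, 2), toR (0, 0), toR (2, 0)} : Set (ℝ × ℝ))) := by
    ext y; simp [mem_insert_iff]; tauto
  have hmid1 : toR (1, 0) = (1/2 : ℝ) • toR (0, 0) + (1/2 : ℝ) • toR (2, 0) := by
    refine Prod.ext ?_ ?_ <;> norm_num [toR, Prod.smul_fst, Prod.smul_snd, Prod.fst_add,
      Prod.snd_add]
  have hmid2 : toR (0, 1) = (1/2 : ℝ) • toR (0, 0) + (1/2 : ℝ) • toR (0, 2) := by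
    refine Prod.ext ?_ ?_ <;> norm_num [toR, Prod.smul_fst, Prod.smul_snd, Prod.fst_add,
      Prod.snd_add]
  have hmem1 : toR (1, 0) ∈ convexHull ℝ
      ({toR (1, 2), toR (0, 2), toR (0, 0), toR (2, 0)} : Set (ℝ × ℝ)) := by
    rw [hmid1]
    exact mem_hull_combo2 (by simp) (by simp) (by norm_num) (by norm_num) (by norm_num)
  have hmem2 : toR (0, 1) ∈ convexHull ℝ (insert (toR (1, 0))
      ({toR (1, 2), toR (0, 2), toR (0, 0), toR (2, 0)} : Set (ℝ × ℝ))) := by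
    rw [hmid2]
    exact mem_hull_combo2 (by simp) (by simp) (by norm_num) (by norm_num) (by norm_num)
  rw [hdrop, hull_insert_of_mem hmem2, hull_insert_of_mem hmem1]
  apply Set.Subset.antisymm
  · apply convexHull_min
    · rintro y (rfl | rfl | rfl | rfl) <;> refine ⟨?_, ?_, ?_, ?_⟩ <;>
        simp only [mem_setOf_eq, rc_sub, toR_fst, toR_snd] <;> norm_num
    · exact convex_K4 _ _ _ _ _ _ _ _
  · rintro x ⟨h1, h2, h3, h4⟩
    simp only [mem_setOf_eq, rc_sub, toR_fst, toR_snd] at h1 h2 h3 h4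
    norm_num at h1 h2 h3 h4
    rcases le_or_gt (x.1 + x.2) 2 with hs | hs
    · refine mem_hull_tri (a := toR (0, 2)) (b := toR (0, 0)) (c := toR (2, 0))
        (by simp) (by simp) (by simp) ?_ ?_ ?_ ?_ <;>
        simp only [rc_sub, rc, Prod.fst_sub, Prod.snd_sub, toR_fst, toR_snd] <;>
        push_cast <;> norm_num <;> linarith
    · refine mem_hull_tri (a := toR (0, 2)) (b := toR (2, 0)) (c := toR (1, 2))
        (by simp) (by simp) (by simp) ?_ ?_ ?_ ?_ <;>
        simp only [rc_sub, rc, Prod.fst_sub, Prod.snd_sub, toR_fst, toR_snd] <;>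
        push_cast <;> norm_num <;> linarith

lemma intP3 : intPts (convexHull ℝ
    ({toR (1, 2), toR (0, 2), toR (0, 1), toR (0, 0), toR (1, 0), toR (2, 0)} : Set (ℝ × ℝ)))
      = {((1 : ℤ), (1 : ℤ))} := by
  have hint := interior_K4 (toR_ne_zero (u := ((0 : ℤ), (-2 : ℤ))) (by norm_num [Prod.ext_iff]))
    (toR_ne_zero (u := ((2 : ℤ), (0 : ℤ))) (by norm_num [Prod.ext_iff]))
    (toR_ne_zero (u := ((-1 : ℤ), (2 : ℤ))) (by norm_num [Prod.ext_iff]))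
    (toR_ne_zero (u := ((-1 : ℤ), (0 : ℤ))) (by norm_num [Prod.ext_iff]))
    (toR (0, 2)) (toR (0, 0)) (toR (2, 0)) (toR (1, 2)) hullP3
  ext p
  simp only [intPts, mem_setOf_eq, hint, strict_toR, mem_singleton_iff]
  simp only [cross, Prod.fst_sub, Prod.snd_sub, Prod.ext_iff]
  constructor
  · rintro ⟨a1, a2, a3, a4⟩
    norm_num at a1 a2 a3 a4 ⊢
    omega
  · rintro ⟨e1, e2⟩
    norm_num [e1, e2]

/-- the pentagon hull of `A D' E C D` in model coordinates -/
lemma hullP4 : convexHull ℝ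
    ({toR (1, 2), toR (0, 2), toR (0, 1), toR (1, 0), toR (2, 0)} : Set (ℝ × ℝ)) =
    {x : ℝ × ℝ | 0 ≤ rc (toR (0, -1)) (x - toR (0, 2)) ∧ 0 ≤ rc (toR (1, -1)) (x - toR (0, 1)) ∧
      0 ≤ rc (toR (1, 0)) (x - toR (1, 0)) ∧ 0 ≤ rc (toR (-1, 2)) (x - toR (2, 0)) ∧
      0 ≤ rc (toR (-1, 0)) (x - toR (1, 2))} := by
  apply Set.Subset.antisymm
  · apply convexHull_min
    · rintro y (rfl | rfl | rfl | rfl | rfl) <;> refine ⟨?_, ?_, ?_, ?_, ?_⟩ <;>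
        simp only [mem_setOf_eq, rc_sub, toR_fst, toR_snd] <;> norm_num
    · exact convex_K5 _ _ _ _ _ _ _ _ _ _
  · rintro x ⟨h1, h2, h3, h4, h5⟩
    simp only [mem_setOf_eq, rc_sub, toR_fst, toR_snd] at h1 h2 h3 h4 h5
    norm_num at h1 h2 h3 h4 h5
    rcases le_or_gt (2 * x.1 + x.2) 2 with hs1 | hs1
    · refine mem_hull_tri (a := toR (0, 2)) (b := toR (0, 1)) (c := toR (1, 0))
        (by simp) (by simp) (by simp) ?_ ?_ ?_ ?_ <;>
        simp only [rc_sub, rc, Prod.fst_sub, Prod.snd_sub, toR_fst, toR_snd] <;>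
        push_cast <;> norm_num <;> linarith
    · rcases le_or_gt (x.1 + x.2) 2 with hs2 | hs2
      · refine mem_hull_tri (a := toR (0, 2)) (b := toR (1, 0)) (c := toR (2, 0))
          (by simp) (by simp) (by simp) ?_ ?_ ?_ ?_ <;>
          simp only [rc_sub, rc, Prod.fst_sub, Prod.snd_sub, toR_fst, toR_snd] <;>
          push_cast <;> norm_num <;> linarith
      · refine mem_hull_tri (a := toR (0, 2)) (b := toR (2, 0)) (c := toR (1, 2))
          (by simp) (by simp) (by simp) ?_ ?_ ?_ ?_ <;>
          simp only [rc_sub, rc, Prod.fst_sub, Prod.snd_sub, toR_fst, toR_snd] <;>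
          push_cast <;> norm_num <;> linarith

lemma intP4 : intPts (convexHull ℝ
    ({toR (1, 2), toR (0, 2), toR (0, 1), toR (1, 0), toR (2, 0)} : Set (ℝ × ℝ)))
      = {((1 : ℤ), (1 : ℤ))} := by
  have hint := interior_K5 (toR_ne_zero (u := ((0 : ℤ), (-1 : ℤ))) (by norm_num [Prod.ext_iff]))
    (toR_ne_zero (u := ((1 : ℤ), (-1 : ℤ))) (by norm_num [Prod.ext_iff]))
    (toR_ne_zero (u := ((1 : ℤ), (0 : ℤ))) (by norm_num [Prod.ext_iff]))
    (toR_ne_zero (u := ((-1 : ℤ), (2 : ℤ))) (by norm_num [Prod.ext_iff]))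
    (toR_ne_zero (u := ((-1 : ℤ), (0 : ℤ))) (by norm_num [Prod.ext_iff]))
    (toR (0, 2)) (toR (0, 1)) (toR (1, 0)) (toR (2, 0)) (toR (1, 2)) hullP4
  ext p
  simp only [intPts, mem_setOf_eq, hint, strict_toR, mem_singleton_iff]
  simp only [cross, Prod.fst_sub, Prod.snd_sub, Prod.ext_iff]
  constructor
  · rintro ⟨a1, a2, a3, a4, a5⟩
    norm_num at a1 a2 a3 a4 a5 ⊢
    omega
  · rintro ⟨e1, e2⟩
    norm_num [e1, e2]

end S11

namespace S11

lemma mem_tri_iff {a b c : ℤ × ℤ} (hd : 0 < cross (b - a) (c - a)) (p : ℤ × ℤ) :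
    toR p ∈ tri a b c ↔
      0 ≤ cross (b - a) (p - a) ∧ 0 ≤ cross (c - b) (p - b) ∧ 0 ≤ cross (a - c) (p - c) := by
  have hdR : 0 < rc (toR b - toR a) (toR c - toR a) := by
    rw [← toR_sub, ← toR_sub, rc_toR]
    exact_mod_cast hd
  unfold tri
  rw [hull3_eq (toR a) (toR b) (toR c) hdR]
  simp only [mem_setOf_eq, ← toR_sub, rc_toR]
  constructor <;> intro h <;> refine ⟨?_, ?_, ?_⟩ <;>
    [exact_mod_cast h.1; exact_mod_cast h.2.1; exact_mod_cast h.2.2;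
     exact_mod_cast h.1; exact_mod_cast h.2.1; exact_mod_cast h.2.2]

lemma emptyTri_of (a b c : ℤ × ℤ) (hd : 0 < cross (b - a) (c - a))
    (h : ∀ p : ℤ × ℤ, 0 ≤ cross (b - a) (p - a) → 0 ≤ cross (c - b) (p - b) →
      0 ≤ cross (a - c) (p - c) → p = a ∨ p = b ∨ p = c) : EmptyTri a b c := by
  refine ⟨hd.ne', ?_⟩
  intro p hp
  rw [mem_tri_iff hd] at hp
  exact h p hp.1 hp.2.1 hp.2.2

lemma emptyT1 : EmptyTri (1, 2) (0, 1) (0, 0) := by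
  refine emptyTri_of _ _ _ (by norm_num [cross, Prod.ext_iff]) ?_
  intro p h1 h2 h3
  simp only [cross, Prod.fst_sub, Prod.snd_sub, Prod.ext_iff] at h1 h2 h3 ⊢
  norm_num at h1 h2 h3 ⊢
  omega

lemma emptyT2 : EmptyTri (1, 2) (0, 2) (0, 1) := by
  refine emptyTri_of _ _ _ (by norm_num [cross, Prod.ext_iff]) ?_
  intro p h1 h2 h3
  simp only [cross, Prod.fst_sub, Prod.snd_sub, Prod.ext_iff] at h1 h2 h3 ⊢
  norm_num at h1 h2 h3 ⊢
  omega

lemma emptyT3 : EmptyTri (0, 1) (0, 0) (1, 0) := by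
  refine emptyTri_of _ _ _ (by norm_num [cross, Prod.ext_iff]) ?_
  intro p h1 h2 h3
  simp only [cross, Prod.fst_sub, Prod.snd_sub, Prod.ext_iff] at h1 h2 h3 ⊢
  norm_num at h1 h2 h3 ⊢
  omega

lemma emptyT4 : EmptyTri (0, 2) (0, 1) (1, 0) := by
  refine emptyTri_of _ _ _ (by norm_num [cross, Prod.ext_iff]) ?_
  intro p h1 h2 h3
  simp only [cross, Prod.fst_sub, Prod.snd_sub, Prod.ext_iff] at h1 h2 h3 ⊢
  norm_num at h1 h2 h3 ⊢
  omega

end S11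

namespace S11

lemma convex_line (u w : ℝ × ℝ) : Convex ℝ {x : ℝ × ℝ | rc u (x - w) = 0} := by
  have e : {x : ℝ × ℝ | rc u (x - w) = 0}
      = {x : ℝ × ℝ | 0 ≤ rc u (x - w)} ∩ {x : ℝ × ℝ | 0 ≤ rc (-u) (x - w)} := by
    ext x
    simp only [mem_setOf_eq, Set.mem_inter_iff, rc_sub, Prod.fst_neg, Prod.snd_neg]
    constructor
    · intro h; constructor <;> linarith
    · rintro ⟨h1, h2⟩; linarith
  rw [e]
  exact (convex_hp _ _).inter (convex_hp _ _)

lemma hull_line_empty {n : ℕ} {V : Fin n → ℤ × ℤ} {u w : ℝ × ℝ} (hu : u ≠ 0)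
    (hV : ∀ i, rc u (toR (V i) - w) = 0) : interior (latticeHull V) = ∅ := by
  refine interior_line_empty (w := w) hu ?_
  unfold latticeHull
  apply convexHull_min
  · rintro y ⟨i, rfl⟩
    exact hV i
  · exact convex_line u w

lemma transportHyps (φ : Uni) {A B C D O : ℤ × ℤ}
    (hbd : bdryPts (latticeHull ![A, B, C, D]) = {A, B, C, D})
    (hint : intPts (latticeHull ![A, B, C, D]) = {O})
    (hstraight : toR C ∈ openSegment ℝ (toR B) (toR D)) :
    bdryPts (latticeHull ![φ.app A, φ.app B, φ.app C, φ.app D])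
        = {φ.app A, φ.app B, φ.app C, φ.app D} ∧
      intPts (latticeHull ![φ.app A, φ.app B, φ.app C, φ.app D]) = {φ.app O} ∧
      toR (φ.app C) ∈ openSegment ℝ (toR (φ.app B)) (toR (φ.app D)) := by
  have hcomp : ![φ.app A, φ.app B, φ.app C, φ.app D] = φ.app ∘ ![A, B, C, D] := by
    funext i; fin_cases i <;> rfl
  refine ⟨?_, ?_, φ.openSegment_app hstraight⟩
  · rw [hcomp, φ.bdryPts_comp, hbd, Set.image_insert_eq, Set.image_insert_eq,
      Set.image_insert_eq, Set.image_singleton]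
  · rw [hcomp, φ.intPts_comp, hint, Set.image_singleton]

lemma interior3_int_iff {a b c : ℤ × ℤ} (hd : 0 < cross (b - a) (c - a)) (p : ℤ × ℤ) :
    toR p ∈ interior (convexHull ℝ ({toR a, toR b, toR c} : Set (ℝ × ℝ))) ↔
      0 < cross (b - a) (p - a) ∧ 0 < cross (c - b) (p - b) ∧ 0 < cross (a - c) (p - c) := by
  have hdR : 0 < rc (toR b - toR a) (toR c - toR a) := by
    rw [← toR_sub, ← toR_sub, rc_toR]; exact_mod_cast hd
  rw [interior_hull3 (toR a) (toR b) (toR c) hdR]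
  simp only [mem_setOf_eq, ← toR_sub, rc_toR]
  constructor <;> intro h <;> refine ⟨?_, ?_, ?_⟩ <;>
    [exact_mod_cast h.1; exact_mod_cast h.2.1; exact_mod_cast h.2.2;
     exact_mod_cast h.1; exact_mod_cast h.2.1; exact_mod_cast h.2.2]

lemma frontier3_int {a b c : ℤ × ℤ} (hd : 0 < cross (b - a) (c - a)) (p : ℤ × ℤ)
    (h1 : 0 ≤ cross (b - a) (p - a)) (h2 : 0 ≤ cross (c - b) (p - b))
    (h3 : 0 ≤ cross (a - c) (p - c))
    (hz : cross (b - a) (p - a) = 0 ∨ cross (c - b) (p - b) = 0 ∨ cross (a - c) (p - c) = 0) :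
    toR p ∈ frontier (convexHull ℝ ({toR a, toR b, toR c} : Set (ℝ × ℝ))) := by
  have hcl : IsClosed (convexHull ℝ ({toR a, toR b, toR c} : Set (ℝ × ℝ))) :=
    (Set.toFinite _).isClosed_convexHull ℝ
  rw [hcl.frontier_eq]
  constructor
  · exact (mem_tri_iff hd p).mpr ⟨h1, h2, h3⟩
  · intro hin
    rw [interior3_int_iff hd] at hin
    rcases hz with hz | hz | hz
    · exact absurd hin.1 (by omega)
    · exact absurd hin.2.1 (by omega)
    · exact absurd hin.2.2 (by omega)

end S11

namespace S11

@[simp] lemma rc_zero_right (u : ℝ × ℝ) : rc u 0 = 0 := by simp [rc]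
@[simp] lemma rc_self (u : ℝ × ℝ) : rc u u = 0 := by simp [rc]; ring

def idU : Uni := ⟨1, 0, 0, 1, 0, 0, 1, Or.inl rfl, by ring⟩
def flipU : Uni := ⟨1, 0, 0, -1, 0, 0, -1, Or.inr rfl, by ring⟩

lemma idU_app (p : ℤ × ℤ) : idU.app p = p := by
  refine Prod.ext ?_ ?_ <;> simp [Uni.app, idU]

lemma flipU_app (p : ℤ × ℤ) : flipU.app p = (p.1, -p.2) := by
  refine Prod.ext ?_ ?_ <;> simp [Uni.app, flipU]

lemma int_prod_ne {v : ℤ × ℤ} (hv : v ≠ 0) : v.1 ≠ 0 ∨ v.2 ≠ 0 := by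
  by_contra hc
  push_neg at hc
  exact hv (Prod.ext hc.1 hc.2)

/-- Stage 1: B ≠ D, and a unimodular map sending B to the origin and D to (g,0). -/
lemma stage1 {B D : ℤ × ℤ} (hBD : B ≠ D) :
    ∃ (φ : Uni) (g : ℤ), 0 < g ∧ φ.app B = (0, 0) ∧ φ.app D = (g, 0) := by
  set v : ℤ × ℤ := D - B with hv
  have hvne : v ≠ 0 := sub_ne_zero.mpr (Ne.symm hBD)
  have hv' := int_prod_ne hvne
  have hgpos : 0 < Int.gcd v.1 v.2 := Int.gcd_pos_iff.mpr hv'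
  set g : ℤ := (Int.gcd v.1 v.2 : ℤ) with hg
  have hgpos' : 0 < g := by rw [hg]; exact_mod_cast hgpos
  set u1 : ℤ := v.1 / g with hu1def
  set u2 : ℤ := v.2 / g with hu2def
  have hd1 : g ∣ v.1 := Int.gcd_dvd_left _ _
  have hd2 : g ∣ v.2 := Int.gcd_dvd_right _ _
  have hu1 : v.1 = g * u1 := (Int.mul_ediv_cancel' hd1).symm
  have hu2 : v.2 = g * u2 := (Int.mul_ediv_cancel' hd2).symm
  have hcop : Int.gcd u1 u2 = 1 := Int.gcd_div_gcd_div_gcd hgpos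
  set s : ℤ := Int.gcdA u1 u2 with hs
  set t : ℤ := Int.gcdB u1 u2 with ht
  have hBez : u1 * s + u2 * t = 1 := by
    have h := Int.gcd_eq_gcd_ab u1 u2
    rw [hcop] at h
    exact_mod_cast h.symm
  refine ⟨⟨s, t, -u2, u1, -(s * B.1 + t * B.2), -(-u2 * B.1 + u1 * B.2), 1, Or.inl rfl,
    by linear_combination hBez⟩, g, hgpos', ?_, ?_⟩
  · refine Prod.ext ?_ ?_ <;> simp only [Uni.app] <;> ring
  · have hD1 : D.1 = B.1 + g * u1 := by
      rw [← hu1, hv]; simp [Prod.fst_sub]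
    have hD2 : D.2 = B.2 + g * u2 := by
      rw [← hu2, hv]; simp [Prod.snd_sub]
    refine Prod.ext ?_ ?_ <;> simp only [Uni.app]
    · linear_combination g * hBez + s * hD1 + t * hD2
    · linear_combination (-u2) * hD1 + u1 * hD2

end S11

namespace S11

lemma stage2 {A2 C1 O2 : ℤ × ℤ} {g : ℤ} (hg : 0 < g)
    (hbd2 : bdryPts (latticeHull ![A2, (0, 0), C1, (g, 0)]) = {A2, (0, 0), C1, (g, 0)})
    (hint2 : intPts (latticeHull ![A2, (0, 0), C1, (g, 0)]) = {O2})
    (hC12 : C1.2 = 0) (hC11a : 0 < C1.1) (hC11b : C1.1 < g) (hb : 0 < A2.2) :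
    g = 2 ∧ C1 = (1, 0) ∧ A2.2 = 2 ∧ O2.2 = 1 ∧ 2 * O2.1 = A2.1 + 1 := by
  have hg2' : 2 ≤ g := by omega
  -- the hull is the triangle (0,0), (g,0), A2
  have hc1mem : toR C1 ∈ convexHull ℝ ({toR (0, 0), toR (g, 0), toR A2} : Set (ℝ × ℝ)) := by
    have hcomb : toR C1 = (1 - (C1.1 : ℝ) / g) • toR (0, 0) + ((C1.1 : ℝ) / g) • toR (g, 0) := by
      have hgR : (0 : ℝ) < g := by exact_mod_cast hg
      refine Prod.ext ?_ ?_ <;>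
        simp only [Prod.fst_add, Prod.snd_add, Prod.smul_fst, Prod.smul_snd, smul_eq_mul,
          toR_fst, toR_snd, hC12]
      · push_cast
        field_simp
        ring
      · push_cast
        ring
    rw [hcomb]
    refine mem_hull_combo2 (by simp) (by simp) ?_ ?_ (by ring)
    · have h1 : (C1.1 : ℝ) / g ≤ 1 := by
        rw [div_le_one (by exact_mod_cast hg)]
        exact_mod_cast hC11b.le
      linarith
    · have hgR : (0 : ℝ) < g := by exact_mod_cast hg
      have : (0 : ℝ) ≤ (C1.1 : ℝ) := by exact_mod_cast hC11a.le
      positivity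
  have hhull : latticeHull ![A2, (0, 0), C1, (g, 0)]
      = convexHull ℝ ({toR (0, 0), toR (g, 0), toR A2} : Set (ℝ × ℝ)) := by
    unfold latticeHull
    rw [range_comp4]
    have hset : ({toR A2, toR (0, 0), toR C1, toR (g, 0)} : Set (ℝ × ℝ))
        = insert (toR C1) ({toR (0, 0), toR (g, 0), toR A2} : Set (ℝ × ℝ)) := by
      ext y; simp [mem_insert_iff]; tauto
    rw [hset, hull_insert_of_mem hc1mem]
  have hd : 0 < cross (((g : ℤ), (0 : ℤ)) - (0, 0)) (A2 - (0, 0)) := by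
    have e : cross (((g : ℤ), (0 : ℤ)) - (0, 0)) (A2 - (0, 0)) = g * A2.2 := by
      simp only [cross, Prod.fst_sub, Prod.snd_sub]; ring
    rw [e]
    exact mul_pos hg hb
  have hcross1 : ∀ q : ℤ × ℤ, cross (((g : ℤ), (0 : ℤ)) - (0, 0)) (q - (0, 0)) = g * q.2 := by
    intro q; simp only [cross, Prod.fst_sub, Prod.snd_sub]; ring
  have hcross2 : ∀ q : ℤ × ℤ, cross (A2 - ((g : ℤ), (0 : ℤ))) (q - ((g : ℤ), (0 : ℤ)))
      = (A2.1 - g) * q.2 - A2.2 * (q.1 - g) := by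
    intro q; simp only [cross, Prod.fst_sub, Prod.snd_sub]; ring
  have hcross3 : ∀ q : ℤ × ℤ, cross (((0 : ℤ), (0 : ℤ)) - A2) (q - A2)
      = A2.2 * q.1 - A2.1 * q.2 := by
    intro q; simp only [cross, Prod.fst_sub, Prod.snd_sub]; ring
  -- membership in boundary points
  have memBdry : ∀ x y : ℤ, 0 ≤ g * y → 0 ≤ (A2.1 - g) * y - A2.2 * (x - g) →
      0 ≤ A2.2 * x - A2.1 * y →
      (g * y = 0 ∨ (A2.1 - g) * y - A2.2 * (x - g) = 0 ∨ A2.2 * x - A2.1 * y = 0) →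
      ((x, y) : ℤ × ℤ) ∈ ({A2, (0, 0), C1, (g, 0)} : Set (ℤ × ℤ)) := by
    intro x y h1 h2 h3 hz
    have hfr : toR (x, y) ∈ frontier (latticeHull ![A2, (0, 0), C1, (g, 0)]) := by
      rw [hhull]
      exact frontier3_int hd (x, y) (by rw [hcross1]; exact h1) (by rw [hcross2]; exact h2)
        (by rw [hcross3]; exact h3)
        (by rw [hcross1, hcross2, hcross3]; exact hz)
    have : ((x, y) : ℤ × ℤ) ∈ bdryPts (latticeHull ![A2, (0, 0), C1, (g, 0)]) := hfr
    rwa [hbd2] at this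
  -- base lattice points
  have basept : ∀ k : ℤ, 0 ≤ k → k ≤ g → ((k : ℤ), (0 : ℤ)) ∈
      ({A2, (0, 0), C1, (g, 0)} : Set (ℤ × ℤ)) := by
    intro k hk0 hkg
    refine memBdry k 0 (by norm_num) ?_ ?_ (Or.inl (by ring))
    · have h := mul_nonneg hb.le (by omega : (0 : ℤ) ≤ g - k)
      nlinarith [h]
    · have h := mul_nonneg hb.le hk0
      nlinarith [h]
  have hm1 := basept 1 (by norm_num) (by omega)
  have hm2 := basept 2 (by norm_num) hg2'
  simp only [mem_insert_iff, mem_singleton_iff, Prod.ext_iff] at hm1 hm2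
  have hg2 : g = 2 := by omega
  have hc11 : C1.1 = 1 := by omega
  have hC1eq : C1 = (1, 0) := Prod.ext hc11 hC12
  subst hg2
  -- no common divisor ≥ 2 of (A2.1, A2.2)
  have claimA : ∀ m a' b' : ℤ, 2 ≤ m → A2.1 = m * a' → A2.2 = m * b' → False := by
    intro m a' b' hm ha hbb
    have hb' : 0 < b' := by nlinarith
    have e2 : (A2.1 - 2) * b' - A2.2 * (a' - 2) = 2 * b' * (m - 1) := by
      rw [ha, hbb]; ring
    have e3 : A2.2 * a' - A2.1 * b' = 0 := by rw [ha, hbb]; ring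
    have hmem := memBdry a' b' (by nlinarith) (by rw [e2]; nlinarith)
      (le_of_eq e3.symm) (Or.inr (Or.inr e3))
    simp only [mem_insert_iff, mem_singleton_iff, Prod.ext_iff] at hmem
    rcases hmem with ⟨h1, h2⟩ | ⟨h1, h2⟩ | ⟨h1, h2⟩ | ⟨h1, h2⟩
    · rw [hbb] at h2
      have : (m - 1) * b' = 0 := by linarith [h2]
      rcases mul_eq_zero.mp this with h | h <;> omega
    · omega
    · rw [hC1eq] at h2; omega
    · omega
  have claimB : ∀ m a' b' : ℤ, 2 ≤ m → A2.1 - 2 = m * a' → A2.2 = m * b' → False := by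
    intro m a' b' hm ha hbb
    have hb' : 0 < b' := by nlinarith
    have e2 : (A2.1 - 2) * b' - A2.2 * ((a' + 2) - 2) = 0 := by
      rw [show A2.1 = m * a' + 2 by omega, hbb]; ring
    have e3 : A2.2 * (a' + 2) - A2.1 * b' = 2 * b' * (m - 1) := by
      rw [show A2.1 = m * a' + 2 by omega, hbb]; ring
    have hmem := memBdry (a' + 2) b' (by nlinarith) (le_of_eq e2.symm)
      (by rw [e3]; nlinarith) (Or.inr (Or.inl e2))
    simp only [mem_insert_iff, mem_singleton_iff, Prod.ext_iff] at hmem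
    rcases hmem with ⟨h1, h2⟩ | ⟨h1, h2⟩ | ⟨h1, h2⟩ | ⟨h1, h2⟩
    · rw [hbb] at h2
      have : (m - 1) * b' = 0 := by linarith [h2]
      rcases mul_eq_zero.mp this with h | h <;> omega
    · omega
    · rw [hC1eq] at h2; omega
    · omega
  -- interior lattice point characterisation
  have hiff : ∀ x y : ℤ, (0 < 2 * y ∧ 0 < (A2.1 - 2) * y - A2.2 * (x - 2) ∧
      0 < A2.2 * x - A2.1 * y) ↔ ((x, y) : ℤ × ℤ) = O2 := by
    intro x y
    have h := Set.ext_iff.mp hint2 ((x, y) : ℤ × ℤ)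
    rw [mem_singleton_iff] at h
    have h2 : ((x, y) : ℤ × ℤ) ∈ intPts (latticeHull ![A2, (0, 0), C1, (2, 0)]) ↔
        (0 < 2 * y ∧ 0 < (A2.1 - 2) * y - A2.2 * (x - 2) ∧ 0 < A2.2 * x - A2.1 * y) := by
      show toR ((x, y) : ℤ × ℤ) ∈ interior _ ↔ _
      rw [hhull, interior3_int_iff hd ((x, y) : ℤ × ℤ), hcross1, hcross2, hcross3]
    exact h2.symm.trans h
  obtain ⟨o1, o2, hO2⟩ : ∃ x y, O2 = ((x, y) : ℤ × ℤ) := ⟨O2.1, O2.2, rfl⟩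
  have hO := (hiff o1 o2).mpr hO2.symm
  obtain ⟨ho1, ho2, ho3⟩ := hO
  have ho2b : o2 < A2.2 := by linarith [ho2, ho3]
  have hbge2 : 2 ≤ A2.2 := by omega
  -- rule out A2.2 ≥ 3
  have hble : A2.2 ≤ 2 := by
    by_contra hb3
    push_neg at hb3
    set Q : ℤ := A2.1 / A2.2 with hQ
    set r : ℤ := A2.1 % A2.2 with hr
    have hdm : A2.2 * Q + r = A2.1 := Int.mul_ediv_add_emod A2.1 A2.2
    have hr0 : 0 ≤ r := Int.emod_nonneg A2.1 (by omega)
    have hrb : r < A2.2 := Int.emod_lt_of_pos A2.1 (by omega)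
    have hp1 : ((Q + 1 : ℤ), (1 : ℤ)) = O2 := by
      refine (hiff (Q + 1) 1).mp ⟨by norm_num, ?_, ?_⟩
      · have e : (A2.1 - 2) * 1 - A2.2 * ((Q + 1) - 2) = r + A2.2 - 2 := by
          linear_combination -hdm
        rw [e]; omega
      · have e : A2.2 * (Q + 1) - A2.1 * 1 = A2.2 - r := by linear_combination hdm
        rw [e]; omega
    rcases (by omega : r = 0 ∨ r = 1 ∨ r = 2 ∨ 3 ≤ r) with hrc | hrc | hrc | hrc
    · exact claimA A2.2 Q 1 (by omega) (by omega) (by ring)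
    · have hp3 : ((2 * Q + 1 : ℤ), (2 : ℤ)) = O2 := by
        refine (hiff (2 * Q + 1) 2).mp ⟨by norm_num, ?_, ?_⟩
        · have e : (A2.1 - 2) * 2 - A2.2 * ((2 * Q + 1) - 2) = 2 * r + A2.2 - 4 := by
            linear_combination -2 * hdm
          rw [e]; omega
        · have e : A2.2 * (2 * Q + 1) - A2.1 * 2 = A2.2 - 2 * r := by
            linear_combination 2 * hdm
          rw [e]; omega
      rw [← hp1] at hp3
      simp only [Prod.ext_iff] at hp3
      omega
    · exact claimB A2.2 Q 1 (by omega) (by omega) (by ring)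
    · have hp2 : ((Q + 2 : ℤ), (1 : ℤ)) = O2 := by
        refine (hiff (Q + 2) 1).mp ⟨by norm_num, ?_, ?_⟩
        · have e : (A2.1 - 2) * 1 - A2.2 * ((Q + 2) - 2) = r - 2 := by
            linear_combination -hdm
          rw [e]; omega
        · have e : A2.2 * (Q + 2) - A2.1 * 1 = 2 * A2.2 - r := by
            linear_combination hdm
          rw [e]; omega
      rw [← hp1] at hp2
      simp only [Prod.ext_iff] at hp2
      omega
  have hbeq : A2.2 = 2 := le_antisymm hble hbge2
  have ho2eq : o2 = 1 := by omega
  refine ⟨rfl, hC1eq, hbeq, by rw [hO2]; exact ho2eq, ?_⟩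
  · rw [hbeq, ho2eq] at ho2 ho3
    rw [hO2]
    simp only
    omega

end S11

namespace S11

lemma normalize {A B C D O : ℤ × ℤ}
    (hbd : bdryPts (latticeHull ![A, B, C, D]) = {A, B, C, D})
    (hint : intPts (latticeHull ![A, B, C, D]) = {O})
    (hstraight : toR C ∈ openSegment ℝ (toR B) (toR D)) :
    ∃ φ : Uni, φ.app B = (0, 0) ∧ φ.app C = (1, 0) ∧ φ.app D = (2, 0) ∧
      φ.app A = (1, 2) ∧ φ.app O = (1, 1) := by
  have hO : toR O ∈ interior (latticeHull ![A, B, C, D]) := by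
    have : O ∈ intPts (latticeHull ![A, B, C, D]) := by rw [hint]; exact Set.mem_singleton _
    exact this
  -- B ≠ D
  have hBD : B ≠ D := by
    intro hBDeq
    rw [← hBDeq, openSegment_same, mem_singleton_iff] at hstraight
    have hCB : C = B := toR_inj hstraight
    by_cases hAB : A = B
    · have hemp := hull_line_empty (V := ![A, B, C, D]) (u := ((1 : ℝ), (0 : ℝ)))
        (w := toR B) (by norm_num [Prod.ext_iff]) ?_
      · rw [hemp] at hO; exact hO
      · intro i; fin_cases i <;> simp [hAB, hCB, ← hBDeq]
    · have hu : toR A - toR B ≠ 0 := sub_ne_zero.mpr (fun h => hAB (toR_inj h))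
      have hemp := hull_line_empty (V := ![A, B, C, D]) (u := toR A - toR B)
        (w := toR B) hu ?_
      · rw [hemp] at hO; exact hO
      · intro i; fin_cases i <;> simp [hCB, ← hBDeq]
  obtain ⟨φ₁, g, hg, hφ₁B, hφ₁D⟩ := stage1 hBD
  obtain ⟨hbd1, hint1, hstr1⟩ := transportHyps φ₁ hbd hint hstraight
  rw [hφ₁B, hφ₁D] at hbd1 hint1 hstr1
  set A1 := φ₁.app A with hA1
  set C1 := φ₁.app C with hC1
  -- properties of C1
  have hC1props : C1.2 = 0 ∧ 0 < C1.1 ∧ C1.1 < g := by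
    obtain ⟨s', t', hs', ht', hst', heq⟩ := hstr1
    have h1 := congrArg Prod.fst heq
    have h2 := congrArg Prod.snd heq
    simp only [Prod.fst_add, Prod.snd_add, Prod.smul_fst, Prod.smul_snd, smul_eq_mul,
      toR_fst, toR_snd] at h1 h2
    push_cast at h1 h2
    have h2' : (C1.2 : ℝ) = 0 := by linarith [h2]
    have hC12 : C1.2 = 0 := by exact_mod_cast h2'
    have h1' : (C1.1 : ℝ) = t' * g := by linarith [h1]
    have hgR : (0 : ℝ) < g := by exact_mod_cast hg
    have ht1 : t' < 1 := by linarith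
    have hlow : (0 : ℝ) < (C1.1 : ℝ) := by
      rw [h1']
      exact mul_pos ht' hgR
    have hhigh : (C1.1 : ℝ) < (g : ℝ) := by
      rw [h1']
      nlinarith
    exact ⟨hC12, by exact_mod_cast hlow, by exact_mod_cast hhigh⟩
  -- A1 is not on the base line
  have hA12 : A1.2 ≠ 0 := by
    intro h0
    have hO1 : φ₁.app O ∈ intPts (latticeHull ![A1, (0, 0), C1, (g, 0)]) := by
      rw [hint1]; exact Set.mem_singleton _
    have hemp := hull_line_empty (V := ![A1, (0, 0), C1, (g, 0)]) (u := ((1 : ℝ), (0 : ℝ)))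
      (w := 0) (by norm_num [Prod.ext_iff]) ?_
    · rw [intPts, mem_setOf_eq, hemp] at hO1
      exact hO1
    · have hline : ∀ X : ℤ × ℤ, X.2 = 0 → rc ((1 : ℝ), (0 : ℝ)) (toR X - 0) = 0 := by
        intro X hX
        simp [rc, hX]
      intro i
      fin_cases i
      · exact hline _ h0
      · exact hline _ rfl
      · exact hline _ hC1props.1
      · exact hline _ rfl
  -- flip if necessary
  obtain ⟨φ₂, h20, h2C, h2g, h2A⟩ : ∃ φ₂ : Uni, φ₂.app (0, 0) = (0, 0) ∧ φ₂.app C1 = C1 ∧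
      φ₂.app ((g : ℤ), (0 : ℤ)) = (g, 0) ∧ 0 < (φ₂.app A1).2 := by
    rcases lt_or_gt_of_ne hA12 with h | h
    · refine ⟨flipU, ?_, ?_, ?_, ?_⟩
      · rw [flipU_app]; norm_num
      · rw [flipU_app]
        exact Prod.ext rfl (by rw [hC1props.1]; norm_num)
      · rw [flipU_app]; norm_num
      · rw [flipU_app]; simpa using by omega
    · exact ⟨idU, idU_app _, idU_app _, idU_app _, by rw [idU_app]; exact h⟩
  obtain ⟨hbd2, hint2, hstr2⟩ := transportHyps φ₂ (A := A1) (B := (0, 0)) (C := C1)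
    (D := ((g : ℤ), (0 : ℤ))) (O := φ₁.app O) hbd1 hint1 hstr1
  rw [h20, h2C, h2g] at hbd2 hint2
  obtain ⟨hg2, hC1eq, hA22, hO22, hO21⟩ := stage2 hg hbd2 hint2 hC1props.1 hC1props.2.1
    hC1props.2.2 h2A
  subst hg2
  set A2 := φ₂.app A1 with hA2
  set O2 := φ₂.app (φ₁.app O) with hO2
  set k : ℤ := O2.1 - 1 with hk
  refine ⟨(⟨1, -k, 0, 1, 0, 0, 1, Or.inl rfl, by ring⟩ : Uni).comp (φ₂.comp φ₁),
    ?_, ?_, ?_, ?_, ?_⟩ <;>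
    rw [Uni.comp_app, Uni.comp_app]
  · rw [hφ₁B, h20]
    refine Prod.ext ?_ ?_ <;> simp [Uni.app]
  · rw [← hC1, h2C, hC1eq]
    refine Prod.ext ?_ ?_ <;> simp [Uni.app]
  · rw [hφ₁D, h2g]
    refine Prod.ext ?_ ?_ <;> simp [Uni.app]
  · rw [← hA1, ← hA2]
    refine Prod.ext ?_ ?_ <;> simp only [Uni.app] <;> rw [hA22] <;> omega
  · rw [← hO2]
    refine Prod.ext ?_ ?_ <;> simp only [Uni.app] <;> rw [hO22] <;> omega

end S11


open S11

/-- Case B: a convex lattice polygon `ABCD` with exactly `4` boundary lattice points,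
unique interior lattice point `O` and a straight angle at `C` (i.e. `C` lies strictly
between `B` and `D`) can be transformed, by the elementary operations
`ABCD → AEBCD → AD'EBCD → AD'ECD → AD'CD` (where `D' = 2O - D` and `E` is the lattice
midpoint of `D'B`), into the parallelogram `AD'CD` with center `O` and no extra boundary
lattice points. -/
theorem stmt_11 (A B C D O : ℤ × ℤ)
    (hbd : bdryPts (latticeHull ![A, B, C, D]) = {A, B, C, D})
    (hint : intPts (latticeHull ![A, B, C, D]) = {O})
    (hstraight : toR C ∈ openSegment ℝ (toR B) (toR D)) :
    ∃ E : ℤ × ℤ, (2 : ℤ) • E = ((2 : ℤ) • O - D) + B ∧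
      EmptyTri A E B ∧
      EmptyTri A ((2 : ℤ) • O - D) E ∧
      EmptyTri E B C ∧
      EmptyTri ((2 : ℤ) • O - D) E C ∧
      intPts (latticeHull ![A, E, B, C, D]) = {O} ∧
      intPts (latticeHull ![A, (2 : ℤ) • O - D, E, B, C, D]) = {O} ∧
      intPts (latticeHull ![A, (2 : ℤ) • O - D, E, C, D]) = {O} ∧
      intPts (latticeHull ![A, (2 : ℤ) • O - D, C, D]) = {O} ∧
      bdryPts (latticeHull ![A, (2 : ℤ) • O - D, C, D]) = {A, (2 : ℤ) • O - D, C, D} ∧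
      A + C = (2 : ℤ) • O := by
  obtain ⟨φ, hB, hC, hD, hA, hO⟩ := normalize hbd hint hstraight
  set ψ := φ.inv with hψ
  have eB : ψ.app (0, 0) = B := by rw [hψ, ← hB, φ.inv_app]
  have eC : ψ.app (1, 0) = C := by rw [hψ, ← hC, φ.inv_app]
  have eD : ψ.app (2, 0) = D := by rw [hψ, ← hD, φ.inv_app]
  have eA : ψ.app (1, 2) = A := by rw [hψ, ← hA, φ.inv_app]
  have eO : ψ.app (1, 1) = O := by rw [hψ, ← hO, φ.inv_app]
  have eD' : ψ.app (0, 2) = (2 : ℤ) • O - D := by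
    rw [← eO, ← eD]
    refine Prod.ext ?_ ?_ <;>
      simp only [Uni.app, Prod.smul_fst, Prod.smul_snd, Prod.fst_sub, Prod.snd_sub,
        smul_eq_mul] <;> ring
  refine ⟨ψ.app (0, 1), ?_, ?_, ?_, ?_, ?_, ?_, ?_, ?_, ?_, ?_, ?_⟩
  · rw [← eD', ← eB]
    refine Prod.ext ?_ ?_ <;>
      simp only [Uni.app, Prod.smul_fst, Prod.smul_snd, Prod.fst_add, Prod.snd_add,
        smul_eq_mul] <;> ring
  · rw [← eA, ← eB]
    exact ψ.emptyTri emptyT1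
  · rw [← eA, ← eD']
    exact ψ.emptyTri emptyT2
  · rw [← eB, ← eC]
    exact ψ.emptyTri emptyT3
  · rw [← eD', ← eC]
    exact ψ.emptyTri emptyT4
  · have hv : ![A, ψ.app (0, 1), B, C, D]
        = ψ.app ∘ ![(1, 2), (0, 1), (0, 0), (1, 0), (2, 0)] := by
      funext i
      fin_cases i
      · exact eA.symm
      · rfl
      · exact eB.symm
      · exact eC.symm
      · exact eD.symm
    rw [hv, ψ.intPts_comp]
    have hm : intPts (latticeHull ![((1 : ℤ), (2 : ℤ)), (0, 1), (0, 0), (1, 0), (2, 0)])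
        = {((1 : ℤ), (1 : ℤ))} := by
      show intPts (convexHull ℝ (Set.range (toR ∘ ![((1 : ℤ), (2 : ℤ)), (0, 1), (0, 0),
        (1, 0), (2, 0)]))) = _
      rw [range_comp5]
      exact intP2
    rw [hm, Set.image_singleton, eO]
  · have hv : ![A, (2 : ℤ) • O - D, ψ.app (0, 1), B, C, D]
        = ψ.app ∘ ![(1, 2), (0, 2), (0, 1), (0, 0), (1, 0), (2, 0)] := by
      funext i
      fin_cases i
      · exact eA.symm
      · exact eD'.symm
      · rfl
      · exact eB.symm
      · exact eC.symm
      · exact eD.symm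
    rw [hv, ψ.intPts_comp]
    have hm : intPts (latticeHull ![((1 : ℤ), (2 : ℤ)), (0, 2), (0, 1), (0, 0), (1, 0), (2, 0)])
        = {((1 : ℤ), (1 : ℤ))} := by
      show intPts (convexHull ℝ (Set.range (toR ∘ ![((1 : ℤ), (2 : ℤ)), (0, 2), (0, 1), (0, 0),
        (1, 0), (2, 0)]))) = _
      rw [range_comp6]
      exact intP3
    rw [hm, Set.image_singleton, eO]
  · have hv : ![A, (2 : ℤ) • O - D, ψ.app (0, 1), C, D]
        = ψ.app ∘ ![(1, 2), (0, 2), (0, 1), (1, 0), (2, 0)] := by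
      funext i
      fin_cases i
      · exact eA.symm
      · exact eD'.symm
      · rfl
      · exact eC.symm
      · exact eD.symm
    rw [hv, ψ.intPts_comp]
    have hm : intPts (latticeHull ![((1 : ℤ), (2 : ℤ)), (0, 2), (0, 1), (1, 0), (2, 0)])
        = {((1 : ℤ), (1 : ℤ))} := by
      show intPts (convexHull ℝ (Set.range (toR ∘ ![((1 : ℤ), (2 : ℤ)), (0, 2), (0, 1),
        (1, 0), (2, 0)]))) = _
      rw [range_comp5]
      exact intP4
    rw [hm, Set.image_singleton, eO]
  · have hv : ![A, (2 : ℤ) • O - D, C, D]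
        = ψ.app ∘ ![(1, 2), (0, 2), (1, 0), (2, 0)] := by
      funext i
      fin_cases i
      · exact eA.symm
      · exact eD'.symm
      · exact eC.symm
      · exact eD.symm
    rw [hv, ψ.intPts_comp]
    have hm : intPts (latticeHull ![((1 : ℤ), (2 : ℤ)), (0, 2), (1, 0), (2, 0)])
        = {((1 : ℤ), (1 : ℤ))} := by
      show intPts (convexHull ℝ (Set.range (toR ∘ ![((1 : ℤ), (2 : ℤ)), (0, 2),
        (1, 0), (2, 0)]))) = _
      rw [range_comp4]
      exact intP5
    rw [hm, Set.image_singleton, eO]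
  · have hv : ![A, (2 : ℤ) • O - D, C, D]
        = ψ.app ∘ ![(1, 2), (0, 2), (1, 0), (2, 0)] := by
      funext i
      fin_cases i
      · exact eA.symm
      · exact eD'.symm
      · exact eC.symm
      · exact eD.symm
    rw [hv, ψ.bdryPts_comp]
    have hm : bdryPts (latticeHull ![((1 : ℤ), (2 : ℤ)), (0, 2), (1, 0), (2, 0)])
        = {((1 : ℤ), (2 : ℤ)), (0, 2), (1, 0), (2, 0)} := by
      show bdryPts (convexHull ℝ (Set.range (toR ∘ ![((1 : ℤ), (2 : ℤ)), (0, 2),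
        (1, 0), (2, 0)]))) = _
      rw [range_comp4]
      exact bdryP5
    rw [hm, Set.image_insert_eq, Set.image_insert_eq, Set.image_insert_eq,
      Set.image_singleton, eA, eD', eC, eD]
  · rw [← eA, ← eC, ← eO]
    refine Prod.ext ?_ ?_ <;>
      simp only [Uni.app, Prod.smul_fst, Prod.smul_snd, Prod.fst_add, Prod.snd_add,
        smul_eq_mul] <;> ring
end
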